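/- arXiv:1812.08212 — 6 statements merged into one kernel-verified Lean document; each statement's English description precedes it below -/
import Mathlib

section
/- Let R be a nontrivial commutative McCoy ring with identity having more than one nonzero zero-divisor. Then diam(Γ(R)) = 3 if and only if either (i) R is Boolean and not isomorphic to ℤ/2ℤ × ℤ/2ℤ, or (ii) Z(R) is not an ideal of R and R is neither Boolean nor isomorphic to a subring of a product of two integral domains. -/
/-- The set of zero-divisors of a commutative ring (including `0`). -/
def zdSet (R : Type*) [CommRing R] : Set R :=
  {x : R | ∃ y : R, y ≠ 0 ∧ x * y = 0}

/-- The set of nonzero zero-divisors. -/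
def zdStar (R : Type*) [CommRing R] : Set R :=
  {x : R | x ≠ 0 ∧ ∃ y : R, y ≠ 0 ∧ x * y = 0}

/-- The zero-divisor graph `Γ(R)`: vertices are the nonzero zero-divisors, and distinct
`x`, `y` are adjacent iff `x * y = 0`. -/
def zdGraph (R : Type*) [CommRing R] : SimpleGraph (zdStar R) where
  Adj x y := x.1 ≠ y.1 ∧ x.1 * y.1 = 0
  symm := ⟨fun x y h => ⟨h.1.symm, by rw [mul_comm]; exact h.2⟩⟩
  loopless := ⟨fun x h => h.1 rfl⟩

/-- The extended zero-divisor graph `Γ̃(R)`: vertices are the nonzero zero-divisors, and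
distinct `x`, `y` are adjacent iff `x * y = 0` or `x + y ∈ Z(R)`. -/
def zdExtGraph (R : Type*) [CommRing R] : SimpleGraph (zdStar R) where
  Adj x y := x.1 ≠ y.1 ∧ (x.1 * y.1 = 0 ∨ x.1 + y.1 ∈ zdSet R)
  symm := ⟨fun x y h => ⟨h.1.symm, by rw [mul_comm, add_comm]; exact h.2⟩⟩
  loopless := ⟨fun x h => h.1 rfl⟩

universe u


namespace Stmt13

set_option linter.unusedSectionVars false

variable {R : Type u} [CommRing R] [Nontrivial R]

lemma zd_ne_one {w : R} (hw : w ∈ zdSet R) : w ≠ 1 := by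
  rintro rfl
  obtain ⟨y, hy0, hy⟩ := hw
  rw [one_mul] at hy
  exact hy0 hy

lemma mem_star {w : R} (h0 : w ≠ 0) (hz : w ∈ zdSet R) : w ∈ zdStar R := ⟨h0, hz⟩

/-- The elementwise "every nonadjacent pair has a common annihilator" property. -/
def QQ (R : Type u) [CommRing R] : Prop :=
  ∀ u v : R, u ∈ zdStar R → v ∈ zdStar R → u ≠ v → u * v ≠ 0 →
    ∃ e : R, e ≠ 0 ∧ e * u = 0 ∧ e * v = 0

lemma exists_mid (u v : R) (hu : u ∈ zdStar R) (hv : v ∈ zdStar R)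
    (hne : u ≠ v) (hm : u * v ≠ 0) :
    (∃ c, c ∈ zdStar R ∧ (u ≠ c ∧ u * c = 0) ∧ (c ≠ v ∧ c * v = 0)) ∨
    (∃ c d, c ∈ zdStar R ∧ d ∈ zdStar R ∧ (u ≠ c ∧ u * c = 0) ∧ (c ≠ d ∧ c * d = 0) ∧
      (d ≠ v ∧ d * v = 0)) := by
  obtain ⟨hu0, a, ha0, hua⟩ := hu
  obtain ⟨hv0, b, hb0, hvb⟩ := hv
  have hav : a ≠ v := by rintro rfl; exact hm hua
  have hbu : b ≠ u := by rintro rfl; rw [mul_comm] at hvb; exact hm hvb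
  by_cases hau : a = u
  · have huu : u * u = 0 := by rw [hau] at hua; exact hua
    by_cases hbv : b = v
    · have hvv : v * v = 0 := by rw [hbv] at hvb; exact hvb
      left
      refine ⟨u * v, mem_star hm ⟨u, hu0, by linear_combination v * huu⟩,
        ⟨fun h => hm (by linear_combination v * h + u * hvv), by linear_combination v * huu⟩,
        ⟨fun h => hm (by linear_combination v * huu - u * h), by linear_combination u * hvv⟩⟩
    · by_cases hbu2 : b * u = 0
      · left
        exact ⟨b, mem_star hb0 ⟨v, hv0, by rw [mul_comm]; exact hvb⟩,
          ⟨Ne.symm hbu, by rw [mul_comm]; exact hbu2⟩,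
          ⟨hbv, by rw [mul_comm]; exact hvb⟩⟩
      · left
        refine ⟨b * u, mem_star hbu2 ⟨u, hu0, by linear_combination b * huu⟩,
          ⟨fun h => hm (by linear_combination v * h + u * hvb), by linear_combination b * huu⟩,
          ⟨fun h => hm (by linear_combination b * huu - u * h), by linear_combination u * hvb⟩⟩
  · by_cases hbv : b = v
    · have hvv : v * v = 0 := by rw [hbv] at hvb; exact hvb
      by_cases hav2 : a * v = 0
      · left
        exact ⟨a, mem_star ha0 ⟨u, hu0, by rw [mul_comm]; exact hua⟩,
          ⟨fun h => hau h.symm, hua⟩, ⟨hav, hav2⟩⟩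
      · left
        refine ⟨a * v, mem_star hav2 ⟨v, hv0, by linear_combination a * hvv⟩,
          ⟨fun h => hm (by linear_combination v * h + a * hvv), by linear_combination v * hua⟩,
          ⟨fun h => hm (by linear_combination v * hua - u * h), by linear_combination a * hvv⟩⟩
    · by_cases hab : a = b
      · left
        exact ⟨a, mem_star ha0 ⟨u, hu0, by rw [mul_comm]; exact hua⟩,
          ⟨fun h => hau h.symm, hua⟩,
          ⟨hav, by rw [hab, mul_comm]; exact hvb⟩⟩
      · by_cases hab2 : a * b = 0
        · right
          exact ⟨a, b, mem_star ha0 ⟨u, hu0, by rw [mul_comm]; exact hua⟩,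
            mem_star hb0 ⟨v, hv0, by rw [mul_comm]; exact hvb⟩,
            ⟨fun h => hau h.symm, hua⟩, ⟨hab, hab2⟩, ⟨hbv, by rw [mul_comm]; exact hvb⟩⟩
        · left
          refine ⟨a * b, mem_star hab2 ⟨u, hu0, by linear_combination b * hua⟩,
            ⟨fun h => hm (by linear_combination v * h + a * hvb), by linear_combination b * hua⟩,
            ⟨fun h => hm (by linear_combination b * hua - u * h), by linear_combination a * hvb⟩⟩

lemma edist_le_three_of_walk {X Y : ↥(zdStar R)} (w : (zdGraph R).Walk X Y)
    (hk : w.length ≤ 3) : (zdGraph R).edist X Y ≤ (3 : ℕ∞) :=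
  le_trans (SimpleGraph.edist_le w) (by exact_mod_cast hk)

lemma edist_le_two_of_walk {X Y : ↥(zdStar R)} (w : (zdGraph R).Walk X Y)
    (hk : w.length ≤ 2) : (zdGraph R).edist X Y ≤ (2 : ℕ∞) :=
  le_trans (SimpleGraph.edist_le w) (by exact_mod_cast hk)

lemma ediam_le_three : (zdGraph R).ediam ≤ 3 := by
  apply SimpleGraph.ediam_le_of_edist_le
  intro x y
  by_cases hxy : x = y
  · rw [hxy, SimpleGraph.edist_self]; exact zero_le
  have hne : x.1 ≠ y.1 := fun h => hxy (Subtype.ext h)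
  by_cases hm : x.1 * y.1 = 0
  · have hadj : (zdGraph R).Adj x y := ⟨hne, hm⟩
    exact edist_le_three_of_walk hadj.toWalk (by simp)
  · rcases exists_mid x.1 y.1 x.2 y.2 hne hm with
      ⟨c, hc, ⟨h1, h2⟩, ⟨h3, h4⟩⟩ | ⟨c, d, hc, hd, ⟨h1, h2⟩, ⟨h3, h4⟩, ⟨h5, h6⟩⟩
    · have hadj1 : (zdGraph R).Adj x ⟨c, hc⟩ := ⟨h1, h2⟩
      have hadj2 : (zdGraph R).Adj ⟨c, hc⟩ y := ⟨h3, h4⟩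
      exact edist_le_three_of_walk
        (SimpleGraph.Walk.cons hadj1 (SimpleGraph.Walk.cons hadj2 SimpleGraph.Walk.nil))
        (by simp)
    · have hadj1 : (zdGraph R).Adj x ⟨c, hc⟩ := ⟨h1, h2⟩
      have hadj2 : (zdGraph R).Adj ⟨c, hc⟩ ⟨d, hd⟩ := ⟨h3, h4⟩
      have hadj3 : (zdGraph R).Adj ⟨d, hd⟩ y := ⟨h5, h6⟩
      exact edist_le_three_of_walk
        (SimpleGraph.Walk.cons hadj1 (SimpleGraph.Walk.cons hadj2
          (SimpleGraph.Walk.cons hadj3 SimpleGraph.Walk.nil)))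
        (by simp)

lemma ediam_le_two (hQ : QQ R) : (zdGraph R).ediam ≤ 2 := by
  apply SimpleGraph.ediam_le_of_edist_le
  intro x y
  by_cases hxy : x = y
  · rw [hxy, SimpleGraph.edist_self]; exact zero_le
  have hne : x.1 ≠ y.1 := fun h => hxy (Subtype.ext h)
  by_cases hm : x.1 * y.1 = 0
  · have hadj : (zdGraph R).Adj x y := ⟨hne, hm⟩
    exact edist_le_two_of_walk hadj.toWalk (by simp)
  · obtain ⟨e, he0, heu, hev⟩ := hQ x.1 y.1 x.2 y.2 hne hm
    have hezd : e ∈ zdStar R := mem_star he0 ⟨x.1, x.2.1, heu⟩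
    have hxe : x.1 ≠ e := by
      rintro h; rw [← h] at hev; exact hm hev
    have hey : e ≠ y.1 := by
      rintro h; rw [h, mul_comm] at heu; exact hm heu
    have hadj1 : (zdGraph R).Adj x ⟨e, hezd⟩ := ⟨hxe, by rw [mul_comm]; exact heu⟩
    have hadj2 : (zdGraph R).Adj ⟨e, hezd⟩ y := ⟨hey, hev⟩
    exact edist_le_two_of_walk
      (SimpleGraph.Walk.cons hadj1 (SimpleGraph.Walk.cons hadj2 SimpleGraph.Walk.nil))
      (by simp)

lemma three_le_edist {u v : R} (hu : u ∈ zdStar R) (hv : v ∈ zdStar R) (hne : u ≠ v)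
    (hm : u * v ≠ 0) (hno : ∀ e : R, e ≠ 0 → e * u = 0 → e * v = 0 → False) :
    3 ≤ (zdGraph R).edist ⟨u, hu⟩ ⟨v, hv⟩ := by
  have key : ∀ (A B : ↥(zdStar R)) (p : (zdGraph R).Walk A B),
      A = (⟨u, hu⟩ : ↥(zdStar R)) → B = (⟨v, hv⟩ : ↥(zdStar R)) → 3 ≤ p.length := by
    intro A B p
    cases p with
    | nil =>
      intro hA hB
      exact absurd (congrArg Subtype.val (hA.symm.trans hB)) hne
    | @cons _ C _ h q =>
      cases q with
      | nil =>
        intro hA hB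
        subst hA; subst hB
        exact absurd h.2 hm
      | @cons _ D _ h2 q2 =>
        cases q2 with
        | nil =>
          intro hA hB
          subst hA; subst hB
          exact absurd (hno C.1 C.2.1 (by rw [mul_comm]; exact h.2) h2.2) not_false
        | cons h3 q3 =>
          intro _ _
          simp only [SimpleGraph.Walk.length_cons]
          omega
  by_contra hlt
  push_neg at hlt
  have hnt : (zdGraph R).edist ⟨u, hu⟩ ⟨v, hv⟩ ≠ ⊤ := ne_top_of_lt hlt
  obtain ⟨p, hp⟩ := SimpleGraph.exists_walk_of_edist_ne_top hnt
  have h3 := key _ _ p rfl rfl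
  rw [← hp] at hlt
  have : p.length < 3 := by exact_mod_cast hlt
  omega

end Stmt13

namespace Stmt13

set_option linter.unusedSectionVars false

variable {R : Type u} [CommRing R] [Nontrivial R]

/-- Embeddability into a product of two domains. -/
def Emb (R : Type u) [CommRing R] : Prop :=
  ∃ (D₁ : Type u) (D₂ : Type u) (_ : CommRing D₁) (_ : CommRing D₂)
    (_ : IsDomain D₁) (_ : IsDomain D₂) (f : R →+* D₁ × D₂), Function.Injective f

lemma lemB (hmccoy : ∀ I : Ideal R, I.FG → (I : Set R) ⊆ zdSet R →
      ∃ a : R, a ≠ 0 ∧ ∀ x ∈ I, a * x = 0)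
    (hI : ∃ I : Ideal R, (I : Set R) = zdSet R) : QQ R := by
  obtain ⟨I, hIc⟩ := hI
  intro u v hu hv huv hm
  have huI : u ∈ I := by
    have : u ∈ (I : Set R) := hIc.symm ▸ (hu.2 : u ∈ zdSet R)
    exact this
  have hvI : v ∈ I := by
    have : v ∈ (I : Set R) := hIc.symm ▸ (hv.2 : v ∈ zdSet R)
    exact this
  have hle : Ideal.span {u, v} ≤ I := by
    rw [Ideal.span_le]
    rintro x (rfl | rfl)
    · exact huI
    · exact hvI
  have hFG : (Ideal.span {u, v} : Ideal R).FG :=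
    Submodule.fg_span ((Set.finite_singleton v).insert u)
  obtain ⟨e, he0, he⟩ := hmccoy (Ideal.span {u, v}) hFG
    (fun x hx => hIc ▸ (hle hx : x ∈ (I : Set R)))
  exact ⟨e, he0, he u (Ideal.subset_span (by simp)), he v (Ideal.subset_span (by simp))⟩

lemma cross_ann {p q : Ideal R} (hq : q.IsPrime) (hpq : ∀ r : R, r ∈ p → r ∈ q → r = 0)
    {u v : R} (hu0 : u ≠ 0) (huzd : u ∈ zdSet R) (hup : u ∈ p) (hvp : v ∈ p) :
    ∃ e : R, e ≠ 0 ∧ e * u = 0 ∧ e * v = 0 := by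
  obtain ⟨y, hy0, huy⟩ := huzd
  have h0 : u * y ∈ q := by rw [huy]; exact q.zero_mem
  rcases hq.mem_or_mem h0 with h | h
  · exact absurd (hpq u hup h) hu0
  · exact ⟨y, hy0, by rw [mul_comm]; exact huy,
      hpq (y * v) (Ideal.mul_mem_left p y hvp) (Ideal.mul_mem_right v q h)⟩

lemma lemC (hE : Emb R) : QQ R := by
  obtain ⟨D₁, D₂, i1, i2, i3, i4, f, hf⟩ := hE
  letI := i1; letI := i2; letI := i3; letI := i4
  set p := RingHom.ker ((RingHom.fst D₁ D₂).comp f) with hp_def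
  set q := RingHom.ker ((RingHom.snd D₁ D₂).comp f) with hq_def
  haveI hp : p.IsPrime := RingHom.ker_isPrime _
  haveI hq : q.IsPrime := RingHom.ker_isPrime _
  have hpq : ∀ r : R, r ∈ p → r ∈ q → r = 0 := by
    intro r h1 h2
    rw [RingHom.mem_ker, RingHom.comp_apply] at h1 h2
    have : f r = f 0 := by
      rw [map_zero]
      exact Prod.ext h1 h2
    exact hf this
  have hqp : ∀ r : R, r ∈ q → r ∈ p → r = 0 := fun r h1 h2 => hpq r h2 h1
  have hdi : ∀ w : R, w ∈ zdSet R → w ∈ p ∨ w ∈ q := by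
    rintro w ⟨y, hy0, hwy⟩
    have h0p : w * y ∈ p := by rw [hwy]; exact p.zero_mem
    have h0q : w * y ∈ q := by rw [hwy]; exact q.zero_mem
    rcases hp.mem_or_mem h0p with h | h
    · exact Or.inl h
    · rcases hq.mem_or_mem h0q with h' | h'
      · exact Or.inr h'
      · exact absurd (hpq y h h') hy0
  intro u v hu hv huv hm
  rcases hdi u hu.2 with h1 | h1 <;> rcases hdi v hv.2 with h2 | h2
  · exact cross_ann hq hpq hu.1 hu.2 h1 h2
  · exact absurd (hpq (u * v) (Ideal.mul_mem_right v p h1) (Ideal.mul_mem_left q u h2)) hm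
  · exact absurd (hpq (u * v) (Ideal.mul_mem_left p u h2) (Ideal.mul_mem_right v q h1)) hm
  · exact cross_ann hp hqp hu.1 hu.2 h1 h2

lemma lemL1 (hbool : ∀ x : R, x * x = x) (hx : ∃ x, x ∈ zdStar R) :
    ¬ ∃ I : Ideal R, (I : Set R) = zdSet R := by
  rintro ⟨I, hIc⟩
  obtain ⟨x, hx0, hxzd⟩ := hx
  have hxI : x ∈ I := by
    have : x ∈ (I : Set R) := hIc.symm ▸ (hxzd : x ∈ zdSet R)
    exact this
  have h1xzd : (1 - x) ∈ zdSet R := ⟨x, hx0, by linear_combination -hbool x⟩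
  have h1xI : (1 - x) ∈ I := by
    have : (1 - x) ∈ (I : Set R) := hIc.symm ▸ h1xzd
    exact this
  have hone : (1 : R) ∈ I := by
    have := I.add_mem hxI h1xI
    simpa using this
  have hone' : (1 : R) ∈ (I : Set R) := hone
  rw [hIc] at hone'
  exact zd_ne_one hone' rfl

lemma lemL3 (h : R ≃+* ZMod 2 × ZMod 2) : Emb R := by
  haveI : IsDomain (ULift.{u} (ZMod 2)) :=
    Function.Injective.isDomain (ULift.ringEquiv (R := ZMod 2)).toRingHom
      (ULift.ringEquiv (R := ZMod 2)).injective
  refine ⟨ULift.{u} (ZMod 2), ULift.{u} (ZMod 2), inferInstance, inferInstance,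
    inferInstance, inferInstance,
    (RingHom.prodMap (ULift.ringEquiv (R := ZMod 2)).symm.toRingHom
      (ULift.ringEquiv (R := ZMod 2)).symm.toRingHom).comp h.toRingHom, ?_⟩
  rw [RingHom.coe_comp, RingHom.coe_prodMap]
  exact (Function.Injective.prodMap (ULift.ringEquiv (R := ZMod 2)).symm.injective
    (ULift.ringEquiv (R := ZMod 2)).symm.injective).comp h.injective

end Stmt13

namespace Stmt13

set_option linter.unusedSectionVars false

variable {R : Type u} [CommRing R] [Nontrivial R]

/-- The annihilator of an element, as an ideal. -/
def annId (a : R) : Ideal R where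
  carrier := {r : R | r * a = 0}
  add_mem' := by
    intro x y hx hy
    simp only [Set.mem_setOf_eq] at *
    linear_combination hx + hy
  zero_mem' := by simp
  smul_mem' := by
    intro r x hx
    simp only [smul_eq_mul, Set.mem_setOf_eq] at *
    linear_combination r * hx

lemma mem_annId {a r : R} : r ∈ annId a ↔ r * a = 0 := Iff.rfl

lemma sq_aux (hQ : QQ R) {a b n : R} (ha0 : a ≠ 0) (hb0 : b ≠ 0)
    (hazd : a ∈ zdSet R) (hbzd : b ∈ zdSet R)
    (hreg : ∀ w : R, (a + b) * w = 0 → w = 0) (hab0 : a * b = 0)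
    (hn0 : n ≠ 0) (hnn : n * n = 0) (hna : n * a = 0) : False := by
  have hnb : n * b ≠ 0 := by
    intro h
    exact hn0 (hreg n (by linear_combination hna + h))
  have hnzd : n ∈ zdSet R := ⟨n, hn0, hnn⟩
  have hanzd : a + n ∈ zdSet R := ⟨n, hn0, by linear_combination hna + hnn⟩
  have han0 : a + n ≠ 0 := by
    intro h
    apply hnb
    linear_combination b * h - hab0
  by_cases hc : a + n = b
  · have hnb_ne : n ≠ b := by
      intro h
      rw [← h] at hc
      exact ha0 (by linear_combination hc)
    obtain ⟨g, hg0, hgn, hgb⟩ := hQ n b (mem_star hn0 hnzd) (mem_star hb0 hbzd) hnb_ne hnb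
    exact hg0 (hreg g (by linear_combination g * hc + 2 * hgb - hgn))
  · have hprod : (a + n) * b ≠ 0 := by
      intro h; apply hnb; linear_combination h - hab0
    obtain ⟨h1, hh0, hhan, hhb⟩ := hQ (a + n) b (mem_star han0 hanzd) (mem_star hb0 hbzd) hc hprod
    have habnzd : a + b + n ∈ zdSet R := ⟨h1, hh0, by linear_combination hhan + hhb⟩
    have habn0 : a + b + n ≠ 0 := by
      intro h
      exact ha0 (hreg a (by linear_combination a * h - hna))
    have hne : n ≠ a + b + n := by
      intro h
      exact one_ne_zero (hreg 1 (by linear_combination -h))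
    have hprod2 : n * (a + b + n) ≠ 0 := by
      intro h; apply hnb; linear_combination h - hna - hnn
    obtain ⟨k, hk0, hkn, hkabn⟩ := hQ n (a + b + n) (mem_star hn0 hnzd)
      (mem_star habn0 habnzd) hne hprod2
    exact hk0 (hreg k (by linear_combination hkabn - hkn))

lemma prime_core {a b : R} (hsq : ∀ n : R, n * n = 0 → n = 0)
    (ha0 : a ≠ 0) (hb0 : b ≠ 0) (hab0 : a * b = 0)
    (hdich : ∀ z : R, z ≠ 0 → z ∈ zdSet R → z * a = 0 ∨ z * b = 0) :
    (annId a).IsPrime := by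
  refine ⟨?_, ?_⟩
  · intro h
    have h1 : (1 : R) ∈ annId a := h ▸ Submodule.mem_top
    have h1' : (1 : R) * a = 0 := h1
    exact ha0 (by linear_combination h1')
  · intro x y hxy
    by_contra hcon
    push_neg at hcon
    obtain ⟨hxa, hya⟩ := hcon
    have hxa' : x * a ≠ 0 := fun h => hxa h
    have hya' : y * a ≠ 0 := fun h => hya h
    have hxy' : (x * y) * a = 0 := hxy
    have hz0 : x * a + b ≠ 0 := by
      intro h
      exact hb0 (hsq b (by linear_combination b * h - x * hab0))
    have hzzd : x * a + b ∈ zdSet R := ⟨y * a, hya', by linear_combination a * hxy' + y * hab0⟩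
    rcases hdich _ hz0 hzzd with h | h
    · exact hxa' (hsq (x * a) (by linear_combination x * h - x * hab0))
    · exact hb0 (hsq b (by linear_combination h - x * hab0))

lemma lemE (hQ : QQ R) (hni : ¬ ∃ I : Ideal R, (I : Set R) = zdSet R) : Emb R := by
  have hclosed : ¬ ∀ x ∈ zdSet R, ∀ y ∈ zdSet R, x + y ∈ zdSet R := by
    intro hadd
    refine hni ⟨{ carrier := zdSet R
                  add_mem' := fun hx hy => hadd _ hx _ hy
                  zero_mem' := ⟨1, one_ne_zero, by ring⟩
                  smul_mem' := ?_ }, rfl⟩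
    rintro r x ⟨y, hy0, hxy⟩
    exact ⟨y, hy0, by rw [smul_eq_mul]; linear_combination r * hxy⟩
  push_neg at hclosed
  obtain ⟨a, hazd, b, hbzd, hab⟩ := hclosed
  have hreg : ∀ w : R, (a + b) * w = 0 → w = 0 := by
    intro w hw
    by_contra h0
    exact hab ⟨w, h0, hw⟩
  have ha0 : a ≠ 0 := by rintro rfl; rw [zero_add] at hab; exact hab hbzd
  have hb0 : b ≠ 0 := by rintro rfl; rw [add_zero] at hab; exact hab hazd
  have hne_ab : a ≠ b := by
    rintro rfl
    obtain ⟨y, hy0, hay⟩ := hazd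
    exact hy0 (hreg y (by linear_combination 2 * hay))
  have hab0 : a * b = 0 := by
    by_contra hm
    obtain ⟨e, he0, hea, heb⟩ := hQ a b (mem_star ha0 hazd) (mem_star hb0 hbzd) hne_ab hm
    exact he0 (hreg e (by linear_combination hea + heb))
  -- R has no nonzero square-zero elements
  have hsq : ∀ n : R, n * n = 0 → n = 0 := by
    intro n hnn
    by_contra hn0
    have hdin : n * a = 0 ∨ n * b = 0 := by
      by_contra hcon
      push_neg at hcon
      obtain ⟨hna, hnb⟩ := hcon
      have hnzd : n ∈ zdSet R := ⟨n, hn0, hnn⟩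
      have hna' : n ≠ a := by rintro rfl; exact hnb hab0
      have hnb' : n ≠ b := by rintro rfl; exact hna (by linear_combination hab0)
      obtain ⟨c, hc0, hcn, hca⟩ := hQ n a (mem_star hn0 hnzd) (mem_star ha0 hazd) hna' hna
      have hanzd : a + n ∈ zdSet R := ⟨c, hc0, by linear_combination hca + hcn⟩
      have han0 : a + n ≠ 0 := by
        intro h
        apply hnb; linear_combination b * h - hab0
      by_cases hcase : a + n = b
      · obtain ⟨d, hd0, hdn, hdb⟩ := hQ n b (mem_star hn0 hnzd) (mem_star hb0 hbzd) hnb' hnb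
        exact hd0 (hreg d (by linear_combination d * hcase + 2 * hdb - hdn))
      · have hprod : (a + n) * b ≠ 0 := by
          intro h; apply hnb; linear_combination h - hab0
        obtain ⟨e, he0, hean, heb⟩ := hQ (a + n) b (mem_star han0 hanzd)
          (mem_star hb0 hbzd) hcase hprod
        have habnzd : a + b + n ∈ zdSet R := ⟨e, he0, by linear_combination hean + heb⟩
        have habn0 : a + b + n ≠ 0 := by
          intro h
          exact hc0 (hreg c (by linear_combination c * h - hcn))
        have hne2 : n ≠ a + b + n := by
          intro h
          exact one_ne_zero (hreg 1 (by linear_combination -h))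
        by_cases hprod2 : n * (a + b + n) = 0
        · exact hn0 (hreg n (by linear_combination hprod2 - hnn))
        · obtain ⟨k, hk0, hkn, hkabn⟩ := hQ n (a + b + n) (mem_star hn0 hnzd)
            (mem_star habn0 habnzd) hne2 hprod2
          exact hk0 (hreg k (by linear_combination hkabn - hkn))
    rcases hdin with h | h
    · exact sq_aux hQ ha0 hb0 hazd hbzd hreg hab0 hn0 hnn h
    · exact sq_aux hQ hb0 ha0 hbzd hazd (fun w hw => hreg w (by linear_combination hw))
        (by linear_combination hab0) hn0 hnn h
  -- dichotomy: every zero divisor kills a or b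
  have hdich : ∀ z : R, z ≠ 0 → z ∈ zdSet R → z * a = 0 ∨ z * b = 0 := by
    intro z hz0 hzzd
    by_contra hcon
    push_neg at hcon
    obtain ⟨hza, hzb⟩ := hcon
    have hzna : z ≠ a := by rintro rfl; exact hzb hab0
    have hznb : z ≠ b := by rintro rfl; exact hza (by linear_combination hab0)
    obtain ⟨c, hc0, hcz, hca⟩ := hQ z a (mem_star hz0 hzzd) (mem_star ha0 hazd) hzna hza
    obtain ⟨d, hd0, hdz, hdb⟩ := hQ z b (mem_star hz0 hzzd) (mem_star hb0 hbzd) hznb hzb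
    by_cases hCase : ∀ m : R, m * c = 0 → m * d = 0 → m * (b - a - m) = 0
    · -- Case II
      have hW : ∀ m : R, m * c = 0 → m * d = 0 → m * m = m * (b - a) := by
        intro m h1 h2
        linear_combination -hCase m h1 h2
      have hzc : z * c = 0 := by linear_combination hcz
      have hzd : z * d = 0 := by linear_combination hdz
      have h2W : ∀ m : R, m * c = 0 → m * d = 0 → 2 * m = 0 := by
        intro m h1 h2
        have hm := hW m h1 h2
        have hm2 := hW (2 * m) (by linear_combination 2 * h1) (by linear_combination 2 * h2)
        exact hsq (2 * m) (by linear_combination 2 * hm2 - 4 * hm)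
      have hWz := hW z hzc hzd
      have hdsq : ∀ r : R, z * (r * r) = z * r := by
        intro r
        have hWrz := hW (r * z) (by linear_combination r * hzc) (by linear_combination r * hzd)
        have h1 : (r * r - r) * (z * z) = 0 := by linear_combination hWrz - r * hWz
        have h2 : ((r * r - r) * z) * ((r * r - r) * z) = 0 := by
          linear_combination (r * r - r) * h1
        have h3 := hsq _ h2
        linear_combination h3
      have hz3 : z * (z * z) = z * z := hdsq z
      have hzz : z * z = z := by
        have h0 : (z * z - z) * (z * z - z) = 0 := by linear_combination (z - 1) * hz3
        have h4 := hsq _ h0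
        linear_combination h4
      have h2za : 2 * (z * a) = 0 := h2W (z * a) (by linear_combination a * hzc)
        (by linear_combination a * hzd)
      have hsum : z * a + z * b = z := by
        linear_combination h2za - hWz + hzz
      have ht2 : (z * b) * (z * b) = z * b := by
        have htW := hW (z * b) (by linear_combination b * hzc) (by linear_combination b * hzd)
        linear_combination htW + hdsq b - z * hab0
      have hs2 : (z * a) * (z * a) = z * a := by
        have hsW := hW (z * a) (by linear_combination a * hzc) (by linear_combination a * hzd)
        linear_combination hsW - hdsq a + z * hab0 - h2za
      have hst0 : (z * a) * (z * b) = 0 := by linear_combination (z * z) * hab0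
      have htzd : z * b ∈ zdSet R := ⟨c, hc0, by linear_combination b * hzc⟩
      have hszd : z * a ∈ zdSet R := ⟨c, hc0, by linear_combination a * hzc⟩
      have hx0 : (1 : R) - z * b ≠ 0 := by
        intro h
        exact zd_ne_one htzd (by linear_combination -h)
      have hy0 : (1 : R) - z * a ≠ 0 := by
        intro h
        exact zd_ne_one hszd (by linear_combination -h)
      have hxzd : (1 : R) - z * b ∈ zdSet R := ⟨z * b, hzb, by linear_combination -ht2⟩
      have hyzd : (1 : R) - z * a ∈ zdSet R := ⟨z * a, hza, by linear_combination -hs2⟩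
      have hz1 : z ≠ 1 := zd_ne_one hzzd
      have hxyne : (1 : R) - z * b ≠ 1 - z * a := by
        intro h
        exact hz0 (by linear_combination h2za - hsum - h)
      have hxy : ((1 : R) - z * b) * (1 - z * a) ≠ 0 := by
        intro h
        exact hz1 (by linear_combination hst0 - h - hsum)
      obtain ⟨e, he0, hex, hey⟩ := hQ _ _ (mem_star hx0 hxzd) (mem_star hy0 hyzd) hxyne hxy
      exact he0 (by linear_combination hex + hey - (1 - z * a) * hex + e * hst0)
    · -- Case I
      push_neg at hCase
      obtain ⟨m, hmc, hmd, hm⟩ := hCase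
      have hprod : (a + m) * (b - m) = m * (b - a - m) := by linear_combination hab0
      have hx0 : a + m ≠ 0 := by
        intro h; apply hm; rw [← hprod, h, zero_mul]
      have hy0 : b - m ≠ 0 := by
        intro h; apply hm; rw [← hprod, h, mul_zero]
      have hxzd : a + m ∈ zdSet R := ⟨c, hc0, by linear_combination hca + hmc⟩
      have hyzd : b - m ∈ zdSet R := ⟨d, hd0, by linear_combination hdb - hmd⟩
      have hxyne : a + m ≠ b - m := by
        intro h
        exact hc0 (hreg c (by linear_combination 2 * hca + 2 * hmc - c * h))
      have hxy : (a + m) * (b - m) ≠ 0 := by rw [hprod]; exact hm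
      obtain ⟨e, he0, hex, hey⟩ := hQ _ _ (mem_star hx0 hxzd) (mem_star hy0 hyzd) hxyne hxy
      exact he0 (hreg e (by linear_combination hex + hey))
  haveI hPa : (annId a).IsPrime := prime_core hsq ha0 hb0 hab0 hdich
  haveI hPb : (annId b).IsPrime := prime_core hsq hb0 ha0 (by linear_combination hab0)
    (fun z h1 h2 => (hdich z h1 h2).symm)
  refine ⟨R ⧸ annId a, R ⧸ annId b, inferInstance, inferInstance, inferInstance, inferInstance,
    (Ideal.Quotient.mk (annId a)).prod (Ideal.Quotient.mk (annId b)), ?_⟩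
  rw [injective_iff_map_eq_zero]
  intro r hr
  have h1 : r ∈ annId a := Ideal.Quotient.eq_zero_iff_mem.mp (congrArg Prod.fst hr)
  have h2 : r ∈ annId b := Ideal.Quotient.eq_zero_iff_mem.mp (congrArg Prod.snd hr)
  have h1' : r * a = 0 := h1
  have h2' : r * b = 0 := h2
  exact hreg r (by linear_combination h1' + h2')

end Stmt13

namespace Stmt13

set_option linter.unusedSectionVars false

variable {R : Type u} [CommRing R] [Nontrivial R]

lemma lemL2 (hbool : ∀ x : R, x * x = x) (hx : ∃ x, x ∈ zdStar R) (hE : Emb R) :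
    Nonempty (R ≃+* ZMod 2 × ZMod 2) := by
  classical
  obtain ⟨D₁, D₂, i1, i2, i3, i4, f, hf⟩ := hE
  letI := i1; letI := i2; letI := i3; letI := i4
  have h01₁ : ∀ r : R, (f r).1 = 0 ∨ (f r).1 = 1 := by
    intro r
    have hid : (f r).1 * (f r).1 = (f r).1 := by
      rw [← Prod.fst_mul, ← map_mul, hbool]
    rcases mul_eq_zero.mp (show (f r).1 * ((f r).1 - 1) = 0 by linear_combination hid)
      with h | h
    · exact Or.inl h
    · exact Or.inr (by linear_combination h)
  have h01₂ : ∀ r : R, (f r).2 = 0 ∨ (f r).2 = 1 := by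
    intro r
    have hid : (f r).2 * (f r).2 = (f r).2 := by
      rw [← Prod.snd_mul, ← map_mul, hbool]
    rcases mul_eq_zero.mp (show (f r).2 * ((f r).2 - 1) = 0 by linear_combination hid)
      with h | h
    · exact Or.inl h
    · exact Or.inr (by linear_combination h)
  have h2z₁ : (1 : D₁) + 1 = 0 := by
    have hf2 : (f (1 + 1)).1 = (1 : D₁) + 1 := by rw [map_add, map_one]; rfl
    rcases h01₁ (1 + 1) with h | h
    · rw [hf2] at h; exact h
    · rw [hf2] at h
      exact absurd (by linear_combination h) (one_ne_zero (α := D₁))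
  have h2z₂ : (1 : D₂) + 1 = 0 := by
    have hf2 : (f (1 + 1)).2 = (1 : D₂) + 1 := by rw [map_add, map_one]; rfl
    rcases h01₂ (1 + 1) with h | h
    · rw [hf2] at h; exact h
    · rw [hf2] at h
      exact absurd (by linear_combination h) (one_ne_zero (α := D₂))
  let g₁ : R →+* ZMod 2 :=
  { toFun := fun r => if (f r).1 = 1 then 1 else 0
    map_one' := by simp [map_one]
    map_mul' := by
      intro r s
      have hm : (f (r * s)).1 = (f r).1 * (f s).1 := by rw [map_mul]; rfl
      rcases h01₁ r with hr | hr <;> rcases h01₁ s with hs | hs <;>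
        simp [hm, hr, hs]
    map_zero' := by simp [map_zero]
    map_add' := by
      intro r s
      have hm : (f (r + s)).1 = (f r).1 + (f s).1 := by rw [map_add]; rfl
      rcases h01₁ r with hr | hr <;> rcases h01₁ s with hs | hs <;>
        simp [hm, hr, hs, h2z₁] <;> decide }
  let g₂ : R →+* ZMod 2 :=
  { toFun := fun r => if (f r).2 = 1 then 1 else 0
    map_one' := by simp [map_one]
    map_mul' := by
      intro r s
      have hm : (f (r * s)).2 = (f r).2 * (f s).2 := by rw [map_mul]; rfl
      rcases h01₂ r with hr | hr <;> rcases h01₂ s with hs | hs <;>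
        simp [hm, hr, hs]
    map_zero' := by simp [map_zero]
    map_add' := by
      intro r s
      have hm : (f (r + s)).2 = (f r).2 + (f s).2 := by rw [map_add]; rfl
      rcases h01₂ r with hr | hr <;> rcases h01₂ s with hs | hs <;>
        simp [hm, hr, hs, h2z₂] <;> decide }
  let g : R →+* ZMod 2 × ZMod 2 := g₁.prod g₂
  have hg_def : ∀ r : R, g r =
      ((if (f r).1 = 1 then 1 else 0 : ZMod 2), (if (f r).2 = 1 then 1 else 0 : ZMod 2)) :=
    fun r => rfl
  have hginj : Function.Injective g := by
    rw [injective_iff_map_eq_zero]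
    intro r hr
    rw [hg_def] at hr
    have hr1 : (if (f r).1 = 1 then (1 : ZMod 2) else 0) = 0 := congrArg Prod.fst hr
    have hr2 : (if (f r).2 = 1 then (1 : ZMod 2) else 0) = 0 := congrArg Prod.snd hr
    have h1 : (f r).1 = 0 := by
      rcases h01₁ r with h | h
      · exact h
      · rw [if_pos h] at hr1; exact absurd hr1 (by decide)
    have h2 : (f r).2 = 0 := by
      rcases h01₂ r with h | h
      · exact h
      · rw [if_pos h] at hr2; exact absurd hr2 (by decide)
    apply hf
    rw [map_zero]
    exact Prod.ext h1 h2
  obtain ⟨x, hx0, hxzd⟩ := hx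
  have hx1 : x ≠ 1 := zd_ne_one hxzd
  have hgx : g x = (1, 0) ∨ g x = (0, 1) := by
    rcases h01₁ x with h1 | h1 <;> rcases h01₂ x with h2 | h2
    · exact absurd (hf (show f x = f 0 by rw [map_zero]; exact Prod.ext h1 h2)) hx0
    · right; rw [hg_def, if_neg (by rw [h1]; exact zero_ne_one), if_pos h2]
    · left; rw [hg_def, if_pos h1, if_neg (by rw [h2]; exact zero_ne_one)]
    · exact absurd (hf (show f x = f 1 by rw [map_one]; exact Prod.ext h1 h2)) hx1
  have hgsurj : Function.Surjective g := by
    intro y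
    have hy : y = (0, 0) ∨ y = (0, 1) ∨ y = (1, 0) ∨ y = (1, 1) :=
      (by decide : ∀ z : ZMod 2 × ZMod 2, z = (0, 0) ∨ z = (0, 1) ∨ z = (1, 0) ∨ z = (1, 1)) y
    rcases hy with rfl | rfl | rfl | rfl
    · exact ⟨0, by rw [map_zero]; decide⟩
    · rcases hgx with h | h
      · exact ⟨1 - x, by rw [map_sub, map_one, h]; decide⟩
      · exact ⟨x, h⟩
    · rcases hgx with h | h
      · exact ⟨x, h⟩
      · exact ⟨1 - x, by rw [map_sub, map_one, h]; decide⟩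
    · exact ⟨1, by rw [map_one]; decide⟩
  exact ⟨RingEquiv.ofBijective g ⟨hginj, hgsurj⟩⟩

end Stmt13


theorem stmt13 (R : Type u) [CommRing R] [Nontrivial R]
    (hcard : (zdStar R).Nontrivial)
    (hmccoy : ∀ I : Ideal R, I.FG → (I : Set R) ⊆ zdSet R →
      ∃ a : R, a ≠ 0 ∧ ∀ x ∈ I, a * x = 0) :
    (zdGraph R).ediam = 3 ↔
      (((∀ x : R, x * x = x) ∧ ¬ Nonempty (R ≃+* (ZMod 2 × ZMod 2))) ∨
       ((¬ (∃ I : Ideal R, (I : Set R) = zdSet R)) ∧ ¬ (∀ x : R, x * x = x) ∧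
        ¬ (∃ (D₁ : Type u) (D₂ : Type u) (_ : CommRing D₁) (_ : CommRing D₂)
      (_ : IsDomain D₁) (_ : IsDomain D₂) (f : R →+* D₁ × D₂), Function.Injective f))) := by
  classical
  have hex : ∃ x, x ∈ zdStar R := by
    obtain ⟨x, hx, -⟩ := hcard
    exact ⟨x, hx⟩
  have hbridge : (zdGraph R).ediam = 3 ↔ ¬ Stmt13.QQ R := by
    constructor
    · intro h hQ
      have h2 := Stmt13.ediam_le_two hQ
      rw [h] at h2
      norm_num at h2
    · intro hQ
      unfold Stmt13.QQ at hQ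
      push_neg at hQ
      obtain ⟨u, v, hu, hv, hne, hm, hno⟩ := hQ
      refine le_antisymm Stmt13.ediam_le_three ?_
      exact le_trans (Stmt13.three_le_edist hu hv hne hm (fun e h1 h2 h3 => hno e h1 h2 h3))
        SimpleGraph.edist_le_ediam
  rw [hbridge]
  constructor
  · intro hnQ
    have hni : ¬ ∃ I : Ideal R, (I : Set R) = zdSet R := fun hI => hnQ (Stmt13.lemB hmccoy hI)
    have hnE : ¬ Stmt13.Emb R := fun hE => hnQ (Stmt13.lemC hE)
    by_cases hb : ∀ x : R, x * x = x
    · exact Or.inl ⟨hb, fun ⟨iso⟩ => hnE (Stmt13.lemL3 iso)⟩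
    · exact Or.inr ⟨hni, hb, hnE⟩
  · rintro (⟨hb, hniso⟩ | ⟨hni, -, hnE⟩) hQ
    · exact hniso (Stmt13.lemL2 hb hex (Stmt13.lemE hQ (Stmt13.lemL1 hb hex)))
    · exact hnE (Stmt13.lemE hQ hni)
end

section
/- Let R be a commutative ring with identity. Then Z(R[X])² = (0) if and only if Z(R)² = (0), where R[X] is the polynomial ring over R; that is, the product of any two zero-divisors of R[X] is zero if and only if the product of any two zero-divisors of R is zero. -/
universe u

/-!
By McCoy's theorem a zero-divisor of `R[X]` is annihilated by a nonzero constant, so all of its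
coefficients are zero-divisors of `R`. If `Z(R)² = 0`, every term `aᵢ bⱼ` of the coefficients of
a product of two zero-divisors of `R[X]` therefore vanishes. Conversely, `C` embeds `Z(R)` into
`Z(R[X])`.
-/

open Polynomial nonZeroDivisors

theorem mem_zdSet_iff_notMem_nonZeroDivisors {R : Type*} [CommRing R] {x : R} :
    x ∈ zdSet R ↔ x ∉ R⁰ := by
  rw [notMem_nonZeroDivisors_iff_left]
  exact ⟨fun ⟨y, hy, hxy⟩ => ⟨y, hxy, hy⟩, fun ⟨y, hxy, hy⟩ => ⟨y, hy, hxy⟩⟩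

namespace Polynomial

variable {R : Type*} [CommRing R]

theorem C_mem_zdSet {x : R} (hx : x ∈ zdSet R) : C x ∈ zdSet R[X] := by
  obtain ⟨y, hy, hxy⟩ := hx
  exact ⟨C y, C_ne_zero.mpr hy, by rw [← C_mul, hxy, C_0]⟩

theorem coeff_mem_zdSet {f : R[X]} (hf : f ∈ zdSet R[X]) (n : ℕ) : f.coeff n ∈ zdSet R := by
  have hf' : f ∉ R[X]⁰ := mem_zdSet_iff_notMem_nonZeroDivisors.mp hf
  obtain ⟨a, ha, haf⟩ := Polynomial.notMem_nonZeroDivisors_iff.mp hf'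
  exact ⟨a, ha, by rw [mul_comm, ← smul_eq_mul, ← coeff_smul, haf, coeff_zero]⟩

end Polynomial

theorem stmt15_general (R : Type u) [CommRing R] :
    (∀ f ∈ zdSet (Polynomial R), ∀ g ∈ zdSet (Polynomial R), f * g = 0) ↔
      (∀ x ∈ zdSet R, ∀ y ∈ zdSet R, x * y = 0) := by
  constructor
  · intro h x hx y hy
    apply C_injective
    rw [C_mul, C_0]
    exact h _ (C_mem_zdSet hx) _ (C_mem_zdSet hy)
  · intro h f hf g hg
    ext n
    rw [coeff_mul, coeff_zero]
    exact Finset.sum_eq_zero fun p _ => h _ (coeff_mem_zdSet hf p.1) _ (coeff_mem_zdSet hg p.2)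

theorem stmt15 (R : Type u) [CommRing R] [Nontrivial R] :
    (∀ f ∈ zdSet (Polynomial R), ∀ g ∈ zdSet (Polynomial R), f * g = 0) ↔
      (∀ x ∈ zdSet R, ∀ y ∈ zdSet R, x * y = 0) :=
  stmt15_general R
end

section
/- Let R be a nontrivial commutative ring with identity that is not an integral domain. Then diam(Γ(R[X])) = 1 if and only if Z(R)² = (0). -/
universe u

open Polynomial

lemma coeff_mem_zdSet {R : Type u} [CommRing R] {f g : Polynomial R}
    (hg : g ≠ 0) (hfg : f * g = 0) (n : ℕ) : f.coeff n ∈ zdSet R := by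
  have hf : f ∉ nonZeroDivisors (Polynomial R) := by
    intro h
    exact hg (h.2 g (by rw [mul_comm]; exact hfg))
  obtain ⟨a, ha, haf⟩ := Polynomial.notMem_nonZeroDivisors_iff.1 hf
  refine ⟨a, ha, ?_⟩
  have := congrArg (fun p => Polynomial.coeff p n) haf
  simpa [mul_comm] using this

theorem stmt16 (R : Type u) [CommRing R] [Nontrivial R]
    (hnd : ¬ IsDomain R) :
    (zdGraph (Polynomial R)).ediam = 1 ↔ (∀ x ∈ zdSet R, ∀ y ∈ zdSet R, x * y = 0) := by
  obtain ⟨a, b, ha, hb, hab⟩ : ∃ a b : R, a ≠ 0 ∧ b ≠ 0 ∧ a * b = 0 := by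
    by_contra hc
    push_neg at hc
    refine hnd ?_
    have : NoZeroDivisors R := ⟨fun {x y} hxy => by
      by_contra h
      push_neg at h
      exact hc x y h.1 h.2 hxy⟩
    exact NoZeroDivisors.to_isDomain R
  constructor
  · intro hd x hx y hy
    rcases eq_or_ne x 0 with rfl | hx0
    · simp
    rcases eq_or_ne y 0 with rfl | hy0
    · simp
    obtain ⟨x', hx', hxx'⟩ := hx
    obtain ⟨y', hy', hyy'⟩ := hy
    set u : zdStar (Polynomial R) :=
      ⟨C x, by simpa using hx0, C x', by simpa using hx', by rw [← C_mul, hxx', C_0]⟩ with hu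
    have hv0 : C y * (1 + X) ≠ 0 := by
      intro hEq
      apply hy0
      have := congrArg (fun p => Polynomial.coeff p 1) hEq
      simpa [mul_add] using this
    have hvz : (C y * (1 + X)) * C y' = 0 := by
      rw [mul_comm (C y), mul_assoc, ← C_mul, hyy', C_0, mul_zero]
    set v : zdStar (Polynomial R) :=
      ⟨C y * (1 + X), hv0, C y', by simpa using hy', hvz⟩ with hv
    have hne : u.1 ≠ v.1 := by
      intro hEq
      apply hy0
      have := congrArg (fun p => Polynomial.coeff p 1) hEq
      simpa [mul_add, u, v] using this.symm
    have hne' : u ≠ v := fun hEq => hne (congrArg Subtype.val hEq)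
    have h1 : (zdGraph (Polynomial R)).edist u v ≤ 1 := hd ▸ SimpleGraph.edist_le_ediam
    have h2 : (zdGraph (Polynomial R)).edist u v ≠ 0 :=
      (SimpleGraph.edist_eq_zero_iff.ne.2 hne')
    have h3 : (zdGraph (Polynomial R)).edist u v = 1 :=
      le_antisymm h1 (Order.one_le_iff_pos.2 (pos_iff_ne_zero.2 h2))
    have hadj := SimpleGraph.edist_eq_one_iff_adj.1 h3
    have hmul : u.1 * v.1 = 0 := (id hadj : u.1 ≠ v.1 ∧ u.1 * v.1 = 0).2
    have hmul' : C x * (C y * (1 + X)) = 0 := hmul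
    have := congrArg (fun p => Polynomial.coeff p 0) hmul'
    simpa [mul_add] using this
  · intro h
    have key : ∀ f g : Polynomial R, f ∈ zdStar (Polynomial R) → g ∈ zdStar (Polynomial R) →
        f * g = 0 := by
      intro f g hf hg
      obtain ⟨-, f', hf', hff'⟩ := hf
      obtain ⟨-, g', hg', hgg'⟩ := hg
      ext n
      rw [Polynomial.coeff_mul, Polynomial.coeff_zero]
      refine Finset.sum_eq_zero fun p _ => ?_
      exact h _ (coeff_mem_zdSet hf' hff' p.1) _ (coeff_mem_zdSet hg' hgg' p.2)
    have ha2 : a * a = 0 := h a ⟨b, hb, hab⟩ a ⟨b, hb, hab⟩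
    set u : zdStar (Polynomial R) :=
      ⟨C a, by simpa using ha, C b, by simpa using hb, by rw [← C_mul, hab, C_0]⟩
    set v : zdStar (Polynomial R) :=
      ⟨C a * X, by simp [ha], C b, by simpa using hb,
        by rw [mul_comm (C a), mul_assoc, ← C_mul, hab, C_0, mul_zero]⟩
    have hne : u ≠ v := by
      intro hEq
      have := congrArg (fun w => Polynomial.coeff w.1 1) hEq
      simp [u, v] at this
      exact ha this.symm
    haveI : Nontrivial (zdStar (Polynomial R)) := ⟨u, v, hne⟩
    rw [SimpleGraph.ediam_eq_one]
    ext f g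
    simp only [SimpleGraph.top_adj, zdGraph]
    constructor
    · exact fun hadj hEq => hadj.1 (congrArg Subtype.val hEq)
    · intro hne'
      exact ⟨fun hEq => hne' (Subtype.ext hEq), key f.1 g.1 f.2 g.2⟩
end

section
/- Let R be a nontrivial commutative ring with identity that is not an integral domain. Then diam(Γ(R[X])) = 2 if and only if either (i) R is isomorphic to a subring of a product of two integral domains, or (ii) R is a McCoy ring and Z(R) is an ideal of R with Z(R)² ≠ (0). -/
universe u

set_option linter.unusedSectionVars false

open Polynomial

namespace Stmt17

variable {R : Type*} [CommRing R]

lemma mccoy [Nontrivial R] {f : R[X]} (hf : f ∈ zdSet (Polynomial R)) :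
    ∃ a : R, a ≠ 0 ∧ C a * f = 0 := by
  obtain ⟨y, hy, hxy⟩ := hf
  have hnm : f ∉ nonZeroDivisors (R[X]) := fun h => hy (h.2 y (by rw [mul_comm]; exact hxy))
  obtain ⟨a, ha, he⟩ := Polynomial.notMem_nonZeroDivisors_iff.mp hnm
  exact ⟨a, ha, by rwa [← Polynomial.smul_eq_C_mul]⟩

lemma mccoy_coeff [Nontrivial R] {f : R[X]} (hf : f ∈ zdSet (Polynomial R)) :
    ∃ a : R, a ≠ 0 ∧ ∀ n, a * f.coeff n = 0 := by
  obtain ⟨a, ha, he⟩ := mccoy hf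
  exact ⟨a, ha, fun n => by
    have := congrArg (fun p => Polynomial.coeff p n) he
    simpa [Polynomial.coeff_C_mul] using this⟩

lemma constZd [Nontrivial R] {x : R} : (C x) ∈ zdSet (Polynomial R) ↔ x ∈ zdSet R := by
  constructor
  · intro h
    obtain ⟨a, ha, he⟩ := mccoy_coeff h
    exact ⟨a, ha, by simpa [mul_comm] using he 0⟩
  · rintro ⟨y, hy, hxy⟩
    exact ⟨C y, by simpa [Polynomial.C_eq_zero] using hy, by rw [← Polynomial.C_mul, hxy, map_zero]⟩

/-- Key ring-theoretic lemma. -/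
lemma obs2 {S : Type*} [CommRing S]
    (dag : ∀ u v : S, u ∈ zdStar S → v ∈ zdStar S → u * v ≠ 0 →
      ∃ c : S, c ≠ 0 ∧ c * u = 0 ∧ c * v = 0)
    {f g h : S} (hf0 : f ≠ 0) (hg0 : g ≠ 0) (hfg : f * g = 0)
    (hs : ∀ t : S, (f + g) * t = 0 → t = 0)
    (hh : h ∈ zdStar S) : h * f = 0 ∨ h * g = 0 := by
  by_contra hc
  push_neg at hc
  obtain ⟨hhf, hhg⟩ := hc
  have hfz : f ∈ zdStar S := ⟨hf0, g, hg0, hfg⟩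
  have hgz : g ∈ zdStar S := ⟨hg0, f, hf0, by rw [mul_comm]; exact hfg⟩
  obtain ⟨c, hc0, hch, hcf⟩ := dag h f hh hfz hhf
  obtain ⟨d, hd0, hdh, hdg⟩ := dag h g hh hgz hhg
  set w := h * f + g with hw
  set w' := h * g + f with hw'
  have hw0 : w ≠ 0 := by
    intro h0
    have : (f + g) * (h * f) = 0 := by linear_combination f * h0 + (h - 1) * hfg
    exact hhf (hs _ this)
  have hw'0 : w' ≠ 0 := by
    intro h0
    have : (f + g) * (h * g) = 0 := by linear_combination g * h0 + (h - 1) * hfg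
    exact hhg (hs _ this)
  have hdw : d * w = 0 := by linear_combination f * hdh + hdg
  have hcw' : c * w' = 0 := by linear_combination g * hch + hcf
  have hww' : w * w' ≠ 0 := by
    intro h0
    have : (f + g) * ((f + g) * h) = 0 := by
      linear_combination h0 + (2 * h - h ^ 2 - 1) * hfg
    exact hh.1 (hs _ (hs _ this))
  have hwz : w ∈ zdStar S := ⟨hw0, d, hd0, by rw [mul_comm]; exact hdw⟩
  have hw'z : w' ∈ zdStar S := ⟨hw'0, c, hc0, by rw [mul_comm]; exact hcw'⟩
  obtain ⟨e, he0, hew, hew'⟩ := dag w w' hwz hw'z hww'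
  have : (f + g) * ((f + g) * e) = 0 := by
    linear_combination f * hew' + g * hew + (2 * e - 2 * e * h) * hfg
  exact he0 (hs _ (hs _ this))

end Stmt17

namespace Stmt17



variable {R : Type u} [CommRing R]

/-- The ideal of `R` of elements annihilating a fixed polynomial. -/
def annIdeal (p : Polynomial R) : Ideal R where
  carrier := {a : R | C a * p = 0}
  zero_mem' := by simp
  add_mem' := by
    intro a b ha hb
    simp only [Set.mem_setOf_eq] at *
    rw [map_add, add_mul, ha, hb, add_zero]
  smul_mem' := by
    intro c a ha
    simp only [Set.mem_setOf_eq, smul_eq_mul] at *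
    rw [map_mul, mul_assoc, ha, mul_zero]

lemma mem_annIdeal {p : Polynomial R} {a : R} : a ∈ annIdeal p ↔ C a * p = 0 := Iff.rfl

lemma annIdeal_prime
    (dag : ∀ u v : R[X], u ∈ zdStar (Polynomial R) → v ∈ zdStar (Polynomial R) → u * v ≠ 0 →
      ∃ c : R[X], c ≠ 0 ∧ c * u = 0 ∧ c * v = 0)
    {p q : R[X]} (hp0 : p ≠ 0) (hq0 : q ≠ 0) (hpq : p * q = 0)
    (hs : ∀ t : R[X], (p + q) * t = 0 → t = 0) : (annIdeal p).IsPrime := by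
  constructor
  · rw [Ideal.ne_top_iff_one, mem_annIdeal]
    simpa using hp0
  · intro a b hab
    rw [mem_annIdeal, map_mul] at hab
    by_contra hcon
    push_neg at hcon
    obtain ⟨ha, hb⟩ := hcon
    rw [mem_annIdeal] at ha hb
    set w : R[X] := C a * p + q with hwdef
    have hvw : w * (C b * p) = 0 := by linear_combination p * hab + C b * hpq
    have hw0 : w ≠ 0 := by
      intro h0
      have : (p + q) * (C a * p) = 0 := by linear_combination p * h0 + (C a - 1) * hpq
      exact ha (hs _ this)
    have hwz : w ∈ zdStar (Polynomial R) := ⟨hw0, C b * p, hb, hvw⟩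
    rcases obs2 dag hp0 hq0 hpq hs hwz with h1 | h2
    · have : (p + q) * (C a * p) = 0 := by linear_combination h1 + (C a - 1) * hpq
      exact ha (hs _ this)
    · have : (p + q) * q = 0 := by linear_combination h2 + (1 - C a) * hpq
      exact hq0 (hs _ this)

lemma caseB [Nontrivial R]
    (dag : ∀ u v : R[X], u ∈ zdStar (Polynomial R) → v ∈ zdStar (Polynomial R) → u * v ≠ 0 →
      ∃ c : R[X], c ≠ 0 ∧ c * u = 0 ∧ c * v = 0)
    {p q : R[X]} (hp : p ∈ zdSet (Polynomial R)) (hq : q ∈ zdSet (Polynomial R))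
    (hsum : p + q ∉ zdSet (Polynomial R)) :
    ∃ (D₁ : Type u) (D₂ : Type u) (_ : CommRing D₁) (_ : CommRing D₂)
      (_ : IsDomain D₁) (_ : IsDomain D₂) (f : R →+* D₁ × D₂), Function.Injective f := by
  have hs : ∀ t : R[X], (p + q) * t = 0 → t = 0 := by
    intro t ht
    by_contra ht0
    exact hsum ⟨t, ht0, ht⟩
  have hp0 : p ≠ 0 := by rintro rfl; exact hsum (by simpa using hq)
  have hq0 : q ≠ 0 := by rintro rfl; exact hsum (by simpa using hp)
  have hpq : p * q = 0 := by
    by_contra hne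
    obtain ⟨c, hc0, hcp, hcq⟩ := dag p q ⟨hp0, hp⟩ ⟨hq0, hq⟩ hne
    exact hsum ⟨c, hc0, by linear_combination hcp + hcq⟩
  have hPrime : (annIdeal p).IsPrime := annIdeal_prime dag hp0 hq0 hpq hs
  have hQrime : (annIdeal q).IsPrime := by
    refine annIdeal_prime ?_ hq0 hp0 (by rw [mul_comm]; exact hpq)
      (fun t ht => hs t (by rw [add_comm]; exact ht))
    exact dag
  letI : IsDomain (R ⧸ annIdeal p) := Ideal.Quotient.isDomain _
  letI : IsDomain (R ⧸ annIdeal q) := Ideal.Quotient.isDomain _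
  refine ⟨R ⧸ annIdeal p, R ⧸ annIdeal q, inferInstance, inferInstance, inferInstance,
    inferInstance, (Ideal.Quotient.mk (annIdeal p)).prod (Ideal.Quotient.mk (annIdeal q)), ?_⟩
  rw [injective_iff_map_eq_zero]
  intro a ha
  rw [Prod.ext_iff] at ha
  obtain ⟨h1, h2⟩ := ha
  have h1' : C a * p = 0 := (Ideal.Quotient.eq_zero_iff_mem.mp h1)
  have h2' : C a * q = 0 := (Ideal.Quotient.eq_zero_iff_mem.mp h2)
  have : (p + q) * C a = 0 := by linear_combination h1' + h2'
  have := hs _ this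
  simpa [Polynomial.C_eq_zero] using this

end Stmt17

namespace Stmt17

variable {R : Type*} [CommRing R]

lemma two_le_enat {n : ℕ∞} (h0 : n ≠ 0) (h1 : n ≠ 1) : 2 ≤ n := by
  induction n using ENat.recTopCoe with
  | top => exact le_top
  | coe k =>
    have hk0 : k ≠ 0 := by simpa using h0
    have hk1 : k ≠ 1 := by simpa using h1
    exact_mod_cast (by omega : 2 ≤ k)

lemma mid {V : Type*} (G : SimpleGraph V) {u v : V} (h2 : G.edist u v ≤ 2) (hne : u ≠ v)
    (hna : ¬ G.Adj u v) : ∃ w, G.Adj u w ∧ G.Adj w v := by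
  have h0 : G.edist u v ≠ 0 := fun h => hne (SimpleGraph.edist_eq_zero_iff.mp h)
  have h1 : G.edist u v ≠ 1 := fun h => hna (SimpleGraph.edist_eq_one_iff_adj.mp h)
  have he : G.edist u v = ((2 : ℕ) : ℕ∞) :=
    le_antisymm (by exact_mod_cast h2) (by exact_mod_cast two_le_enat h0 h1)
  obtain ⟨p, hp⟩ := SimpleGraph.exists_walk_of_edist_eq_coe he
  cases p with
  | nil => simp at hp
  | cons h q =>
    cases q with
    | nil => simp at hp
    | cons h' q' =>
      cases q' with
      | nil => exact ⟨_, h, h'⟩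
      | cons h'' q'' => simp [SimpleGraph.Walk.length_cons] at hp

lemma mul_X_ne {f : R[X]} (hf : f ≠ 0) : f ≠ f * X := by
  intro h
  apply hf
  refine (Polynomial.monic_X_sub_C (1 : R)).mem_nonZeroDivisors.2 f ?_
  have : (C (1:R) : R[X]) = 1 := map_one C
  linear_combination -h - f * this

lemma mul_X_ne_zero {f : R[X]} (hf : f ≠ 0) : f * X ≠ 0 := fun h =>
  hf (Polynomial.monic_X.mem_nonZeroDivisors.2 f h)

lemma ediam_iff [Nontrivial R] :
    (zdGraph (Polynomial R)).ediam = 2 ↔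
      ((∀ u v : R[X], u ∈ zdStar (Polynomial R) → v ∈ zdStar (Polynomial R) → u * v ≠ 0 →
        ∃ c : R[X], c ≠ 0 ∧ c * u = 0 ∧ c * v = 0) ∧
       (∃ f g : R[X], f ∈ zdSet (Polynomial R) ∧ g ∈ zdSet (Polynomial R) ∧ f * g ≠ 0)) := by
  set G := zdGraph (Polynomial R) with hG
  constructor
  · intro h
    have hle : ∀ u v : ↥(zdStar (Polynomial R)), G.edist u v ≤ 2 := fun u v =>
      h ▸ SimpleGraph.edist_le_ediam
    constructor
    · intro f g hf hg hprod
      by_cases hfg : f = g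
      · subst hfg
        set u : ↥(zdStar (Polynomial R)) := ⟨f, hf⟩ with hu
        obtain ⟨y, hy0, hfy⟩ := hf.2
        set v : ↥(zdStar (Polynomial R)) :=
          ⟨f * X, mul_X_ne_zero hf.1, y, hy0, by linear_combination X * hfy⟩ with hv
        have hne : u ≠ v := fun hh => mul_X_ne hf.1 (congrArg Subtype.val hh)
        have hna : ¬ G.Adj u v := by
          rintro ⟨-, hadj⟩
          apply hprod
          refine Polynomial.monic_X.mem_nonZeroDivisors.2 (f * f) ?_
          linear_combination hadj
        obtain ⟨w, h1, h2⟩ := mid G (hle u v) hne hna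
        exact ⟨w.1, w.2.1, by rw [mul_comm]; exact h1.2, by rw [mul_comm]; exact h1.2⟩
      · set u : ↥(zdStar (Polynomial R)) := ⟨f, hf⟩ with hu
        set v : ↥(zdStar (Polynomial R)) := ⟨g, hg⟩ with hv
        have hne : u ≠ v := fun hh => hfg (congrArg Subtype.val hh)
        have hna : ¬ G.Adj u v := fun a => hprod a.2
        obtain ⟨w, h1, h2⟩ := mid G (hle u v) hne hna
        exact ⟨w.1, w.2.1, by rw [mul_comm]; exact h1.2, h2.2⟩
    · by_contra hP
      push_neg at hP
      have hle1 : G.ediam ≤ 1 := by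
        apply SimpleGraph.ediam_le_of_edist_le
        intro u v
        by_cases he : u = v
        · subst he; simp [SimpleGraph.edist_self]
        · have : G.Adj u v :=
            ⟨fun hh => he (Subtype.ext hh), hP u.1 v.1 u.2.2 v.2.2⟩
          exact (SimpleGraph.edist_eq_one_iff_adj.mpr this).le
      rw [h] at hle1
      norm_num at hle1
  · rintro ⟨dag, f, g, hf, hg, hprod⟩
    have hf0 : f ≠ 0 := fun h => hprod (by rw [h, zero_mul])
    have hg0 : g ≠ 0 := fun h => hprod (by rw [h, mul_zero])
    apply le_antisymm
    · apply SimpleGraph.ediam_le_of_edist_le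
      intro u v
      by_cases he : u = v
      · subst he; simp [SimpleGraph.edist_self]
      by_cases ha : G.Adj u v
      · exact (SimpleGraph.edist_eq_one_iff_adj.mpr ha).le.trans (by norm_num)
      have hne1 : u.1 ≠ v.1 := fun hh => he (Subtype.ext hh)
      have hprod' : u.1 * v.1 ≠ 0 := fun hh => ha ⟨hne1, hh⟩
      obtain ⟨c, hc0, hcu, hcv⟩ := dag u.1 v.1 u.2 v.2 hprod'
      set w : ↥(zdStar (Polynomial R)) :=
        ⟨c, hc0, u.1, u.2.1, hcu⟩ with hw
      have adj1 : G.Adj u w := by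
        refine ⟨fun hh => hprod' ?_, by rw [mul_comm]; exact hcu⟩
        rw [hh]; exact hcv
      have adj2 : G.Adj w v := by
        refine ⟨fun hh => hprod' ?_, hcv⟩
        rw [← hh, mul_comm]; exact hcu
      have := SimpleGraph.edist_le
        (SimpleGraph.Walk.cons adj1 (SimpleGraph.Walk.cons adj2 SimpleGraph.Walk.nil))
      simpa using this
    · have key : ∀ u v : ↥(zdStar (Polynomial R)), u ≠ v → ¬ G.Adj u v → 2 ≤ G.ediam := by
        intro u v hne hna
        refine le_trans (two_le_enat ?_ ?_) (SimpleGraph.edist_le_ediam (u := u) (v := v))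
        · exact fun hh => hne (SimpleGraph.edist_eq_zero_iff.mp hh)
        · exact fun hh => hna (SimpleGraph.edist_eq_one_iff_adj.mp hh)
      by_cases hfg : f = g
      · subst hfg
        obtain ⟨y, hy0, hfy⟩ := hf
        refine key ⟨f, hf0, y, hy0, hfy⟩
          ⟨f * X, mul_X_ne_zero hf0, y, hy0, by linear_combination X * hfy⟩
          (fun hh => mul_X_ne hf0 (congrArg Subtype.val hh)) ?_
        rintro ⟨-, hadj⟩
        apply hprod
        refine Polynomial.monic_X.mem_nonZeroDivisors.2 (f * f) ?_
        linear_combination hadj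
      · refine key ⟨f, hf0, hf⟩ ⟨g, hg0, hg⟩
          (fun hh => hfg (congrArg Subtype.val hh)) (fun a => hprod a.2)

end Stmt17

namespace Stmt17

variable {R : Type*} [CommRing R]

lemma exists_zd [Nontrivial R] (hnd : ¬ IsDomain R) :
    ∃ a b : R, a ≠ 0 ∧ b ≠ 0 ∧ a * b = 0 := by
  by_contra h
  push_neg at h
  apply hnd
  have : NoZeroDivisors R := ⟨fun {a b} hab => by
    by_contra hc
    push_neg at hc
    exact h a b hc.1 hc.2 hab⟩
  exact NoZeroDivisors.to_isDomain R

section CaseI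

variable {D₁ D₂ : Type*} [CommRing D₁] [CommRing D₂] [IsDomain D₁] [IsDomain D₂]
  (φ : R →+* D₁ × D₂) (hφ : Function.Injective φ)

include φ hφ

lemma pair_inj : ∀ p : R[X],
    p.map ((RingHom.fst D₁ D₂).comp φ) = 0 → p.map ((RingHom.snd D₁ D₂).comp φ) = 0 → p = 0 := by
  intro p h1 h2
  ext n
  have e1 := congrArg (fun r => Polynomial.coeff r n) h1
  have e2 := congrArg (fun r => Polynomial.coeff r n) h2
  simp only [Polynomial.coeff_map, Polynomial.coeff_zero] at e1 e2
  have : φ (p.coeff n) = 0 := Prod.ext e1 e2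
  simpa using hφ (by rw [this, map_zero])

lemma side_zero : ∀ p : R[X], p ∈ zdStar (Polynomial R) →
    p.map ((RingHom.fst D₁ D₂).comp φ) = 0 ∨ p.map ((RingHom.snd D₁ D₂).comp φ) = 0 := by
  rintro p ⟨hp0, q, hq0, hpq⟩
  have h1 : p.map ((RingHom.fst D₁ D₂).comp φ) * q.map ((RingHom.fst D₁ D₂).comp φ) = 0 := by
    rw [← Polynomial.map_mul, hpq, Polynomial.map_zero]
  have h2 : p.map ((RingHom.snd D₁ D₂).comp φ) * q.map ((RingHom.snd D₁ D₂).comp φ) = 0 := by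
    rw [← Polynomial.map_mul, hpq, Polynomial.map_zero]
  rcases mul_eq_zero.mp h1 with hp1 | hq1
  · exact Or.inl hp1
  rcases mul_eq_zero.mp h2 with hp2 | hq2
  · exact Or.inr hp2
  exact absurd (pair_inj φ hφ q hq1 hq2) hq0

lemma caseI_dag : ∀ u v : R[X], u ∈ zdStar (Polynomial R) → v ∈ zdStar (Polynomial R) →
    u * v ≠ 0 → ∃ c : R[X], c ≠ 0 ∧ c * u = 0 ∧ c * v = 0 := by
  intro p q hp hq hprod
  set m₁ := (RingHom.fst D₁ D₂).comp φ
  set m₂ := (RingHom.snd D₁ D₂).comp φ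
  have hps := side_zero φ hφ p hp
  have hqs := side_zero φ hφ q hq
  obtain ⟨hp0, y, hy0, hpy⟩ := hp
  obtain ⟨hq0, z, hz0, hqz⟩ := hq
  -- mixed sides contradict hprod
  have mixed : ∀ {a b : R[X]}, a.map m₁ = 0 → b.map m₂ = 0 → a * b = 0 := by
    intro a b h1 h2
    apply pair_inj φ hφ
    · rw [Polynomial.map_mul, h1, zero_mul]
    · rw [Polynomial.map_mul, h2, mul_zero]
  -- same-side common annihilator construction
  have main : ∀ p' q' y' z' : R[X], p' ≠ 0 → q' ≠ 0 → y' ≠ 0 → z' ≠ 0 →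
      p' * y' = 0 → q' * z' = 0 → p'.map m₂ = 0 → q'.map m₂ = 0 →
      ∃ c : R[X], c ≠ 0 ∧ c * p' = 0 ∧ c * q' = 0 := by
    intro p' q' y' z' hp0' hq0' hy0' hz0' hpy' hqz' hpm hqm
    have hpm1 : p'.map m₁ ≠ 0 := fun h => hp0' (pair_inj φ hφ p' h hpm)
    have hy1 : y'.map m₁ = 0 := by
      have : p'.map m₁ * y'.map m₁ = 0 := by rw [← Polynomial.map_mul, hpy', Polynomial.map_zero]
      rcases mul_eq_zero.mp this with h | h
      · exact absurd h hpm1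
      · exact h
    have hqm1 : q'.map m₁ ≠ 0 := fun h => hq0' (pair_inj φ hφ q' h hqm)
    have hz1 : z'.map m₁ = 0 := by
      have : q'.map m₁ * z'.map m₁ = 0 := by rw [← Polynomial.map_mul, hqz', Polynomial.map_zero]
      rcases mul_eq_zero.mp this with h | h
      · exact absurd h hqm1
      · exact h
    have hy2 : y'.map m₂ ≠ 0 := fun h => hy0' (pair_inj φ hφ y' hy1 h)
    have hz2 : z'.map m₂ ≠ 0 := fun h => hz0' (pair_inj φ hφ z' hz1 h)
    refine ⟨y' * z', ?_, by linear_combination z' * hpy', by linear_combination y' * hqz'⟩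
    intro h
    apply mul_ne_zero hy2 hz2
    rw [← Polynomial.map_mul, h, Polynomial.map_zero]
  rcases hps with hp1 | hp2
  · rcases hqs with hq1 | hq2
    · -- both side-1 zero : symmetric version of main
      have main' : ∃ c : R[X], c ≠ 0 ∧ c * p = 0 ∧ c * q = 0 := by
        have hpm2 : p.map m₂ ≠ 0 := fun h => hp0 (pair_inj φ hφ p hp1 h)
        have hy2 : y.map m₂ = 0 := by
          have : p.map m₂ * y.map m₂ = 0 := by rw [← Polynomial.map_mul, hpy, Polynomial.map_zero]
          rcases mul_eq_zero.mp this with h | h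
          · exact absurd h hpm2
          · exact h
        have hqm2 : q.map m₂ ≠ 0 := fun h => hq0 (pair_inj φ hφ q hq1 h)
        have hz2 : z.map m₂ = 0 := by
          have : q.map m₂ * z.map m₂ = 0 := by rw [← Polynomial.map_mul, hqz, Polynomial.map_zero]
          rcases mul_eq_zero.mp this with h | h
          · exact absurd h hqm2
          · exact h
        have hy1 : y.map m₁ ≠ 0 := fun h => hy0 (pair_inj φ hφ y h hy2)
        have hz1 : z.map m₁ ≠ 0 := fun h => hz0 (pair_inj φ hφ z h hz2)
        refine ⟨y * z, ?_, by linear_combination z * hpy, by linear_combination y * hqz⟩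
        intro h
        apply mul_ne_zero hy1 hz1
        rw [← Polynomial.map_mul, h, Polynomial.map_zero]
      exact main'
    · exact absurd (mixed hp1 hq2) hprod
  · rcases hqs with hq1 | hq2
    · exact absurd (mul_comm p q ▸ mixed hq1 hp2) hprod
    · exact main p q y z hp0 hq0 hy0 hz0 hpy hqz hp2 hq2

lemma caseI_pairs [Nontrivial R] (hnd : ¬ IsDomain R) :
    ∃ f g : R[X], f ∈ zdSet (Polynomial R) ∧ g ∈ zdSet (Polynomial R) ∧ f * g ≠ 0 := by
  obtain ⟨a, b, ha0, hb0, hab⟩ := exists_zd hnd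
  have haa : a * a ≠ 0 := by
    by_cases h1 : ((RingHom.fst D₁ D₂).comp φ) a = 0
    · have h2 : ((RingHom.snd D₁ D₂).comp φ) a ≠ 0 := by
        intro h2
        exact ha0 (by simpa using hφ (show φ a = φ 0 by rw [map_zero]; exact Prod.ext h1 h2))
      intro h
      exact mul_ne_zero h2 h2 (by rw [← map_mul, h, map_zero])
    · intro h
      exact mul_ne_zero h1 h1 (by rw [← map_mul, h, map_zero])
  have hmem : (Polynomial.C a) ∈ zdSet (Polynomial R) :=
    ⟨Polynomial.C b, by simpa [Polynomial.C_eq_zero] using hb0,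
      by rw [← Polynomial.C_mul, hab, map_zero]⟩
  refine ⟨Polynomial.C a, Polynomial.C a, hmem, hmem, fun h => haa ?_⟩
  have h' : Polynomial.C (a * a) = (0 : R[X]) := by rw [Polynomial.C_mul]; exact h
  exact Polynomial.C_eq_zero.mp h'

end CaseI

end Stmt17

namespace Stmt17

variable {R : Type*} [CommRing R]

lemma caseII_dag [Nontrivial R]
    (hMc : ∀ I : Ideal R, I.FG → (I : Set R) ⊆ zdSet R →
      ∃ a : R, a ≠ 0 ∧ ∀ x ∈ I, a * x = 0)
    (hI : ∃ I : Ideal R, (I : Set R) = zdSet R) :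
    ∀ u v : R[X], u ∈ zdStar (Polynomial R) → v ∈ zdStar (Polynomial R) →
      u * v ≠ 0 → ∃ c : R[X], c ≠ 0 ∧ c * u = 0 ∧ c * v = 0 := by
  classical
  obtain ⟨IZ, hIZ⟩ := hI
  intro p q hp hq _
  obtain ⟨rp, hrp, hrpc⟩ := mccoy_coeff hp.2
  obtain ⟨rq, hrq, hrqc⟩ := mccoy_coeff hq.2
  set T : Finset R := p.support.image p.coeff ∪ q.support.image q.coeff with hT
  set J : Ideal R := Ideal.span (T : Set R) with hJ
  have hsubT : (T : Set R) ⊆ zdSet R := by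
    intro t ht
    rcases Finset.mem_union.mp ht with h | h
    · obtain ⟨n, _, rfl⟩ := Finset.mem_image.mp h
      exact ⟨rp, hrp, by rw [mul_comm]; exact hrpc n⟩
    · obtain ⟨n, _, rfl⟩ := Finset.mem_image.mp h
      exact ⟨rq, hrq, by rw [mul_comm]; exact hrqc n⟩
  have hle : J ≤ IZ := Ideal.span_le.mpr (by rw [hIZ]; exact hsubT)
  have hsub : (J : Set R) ⊆ zdSet R := fun x hx => by rw [← hIZ]; exact hle hx
  obtain ⟨a, ha0, hann⟩ := hMc J ⟨T, rfl⟩ hsub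
  have hcoeff : ∀ (r : R[X]), (∀ n, r.coeff n ∈ (T : Set R)  ∨ r.coeff n = 0) →
      Polynomial.C a * r = 0 := by
    intro r hr
    ext n
    rw [Polynomial.coeff_C_mul, Polynomial.coeff_zero]
    rcases hr n with h | h
    · exact hann _ (Ideal.subset_span h)
    · rw [h, mul_zero]
  refine ⟨Polynomial.C a, by simpa [Polynomial.C_eq_zero] using ha0, ?_, ?_⟩
  · refine hcoeff p (fun n => ?_)
    by_cases hn : n ∈ p.support
    · exact Or.inl (Finset.mem_coe.mpr (Finset.mem_union_left _ (Finset.mem_image.mpr ⟨n, hn, rfl⟩)))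
    · exact Or.inr (Polynomial.notMem_support_iff.mp hn)
  · refine hcoeff q (fun n => ?_)
    by_cases hn : n ∈ q.support
    · exact Or.inl (Finset.mem_coe.mpr (Finset.mem_union_right _ (Finset.mem_image.mpr ⟨n, hn, rfl⟩)))
    · exact Or.inr (Polynomial.notMem_support_iff.mp hn)

lemma caseII_pairs [Nontrivial R] {x y : R} (hx : x ∈ zdSet R) (hy : y ∈ zdSet R)
    (hxy : x * y ≠ 0) :
    ∃ f g : R[X], f ∈ zdSet (Polynomial R) ∧ g ∈ zdSet (Polynomial R) ∧ f * g ≠ 0 := by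
  refine ⟨Polynomial.C x, Polynomial.C y, constZd.mpr hx, constZd.mpr hy, fun h => hxy ?_⟩
  have h' : Polynomial.C (x * y) = (0 : R[X]) := by rw [Polynomial.C_mul]; exact h
  exact Polynomial.C_eq_zero.mp h'

/-- From Dagger + Pairs to the right-hand side. -/
lemma backward {R : Type u} [CommRing R] [Nontrivial R]
    (dag : ∀ u v : R[X], u ∈ zdStar (Polynomial R) → v ∈ zdStar (Polynomial R) →
      u * v ≠ 0 → ∃ c : R[X], c ≠ 0 ∧ c * u = 0 ∧ c * v = 0)
    (pairs : ∃ f g : R[X], f ∈ zdSet (Polynomial R) ∧ g ∈ zdSet (Polynomial R) ∧ f * g ≠ 0) :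
    ((∃ (D₁ : Type u) (D₂ : Type u) (_ : CommRing D₁) (_ : CommRing D₂)
      (_ : IsDomain D₁) (_ : IsDomain D₂) (f : R →+* D₁ × D₂), Function.Injective f) ∨
       ((∀ I : Ideal R, I.FG → (I : Set R) ⊆ zdSet R →
      ∃ a : R, a ≠ 0 ∧ ∀ x ∈ I, a * x = 0) ∧
        (∃ I : Ideal R, (I : Set R) = zdSet R) ∧ (∃ x ∈ zdSet R, ∃ y ∈ zdSet R, x * y ≠ 0))) := by
  by_cases hadd : ∀ p q : R[X], p ∈ zdSet (Polynomial R) → q ∈ zdSet (Polynomial R) →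
      p + q ∈ zdSet (Polynomial R)
  · right
    classical
    refine ⟨?_, ?_, ?_⟩
    · -- McCoy property
      intro I hFG hsub
      obtain ⟨T, hT⟩ := hFG
      have claim : ∀ T' : Finset R, (T' : Set R) ⊆ zdSet R →
          ∃ p : R[X], p ∈ zdSet (Polynomial R) ∧ ∀ t ∈ T', ∃ n, p.coeff n = t := by
        intro T'
        induction T' using Finset.induction_on with
        | empty => exact fun _ => ⟨0, ⟨1, one_ne_zero, zero_mul 1⟩, by simp⟩
        | @insert a T'' ha ih =>
          intro hsub'
          obtain ⟨p, hpz, hpc⟩ := ih (fun t ht => hsub' (Finset.mem_coe.mpr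
            (Finset.mem_insert_of_mem ht)))
          set k := p.natDegree + 1 with hk
          have hCa : (Polynomial.C a) ∈ zdSet (Polynomial R) :=
            constZd.mpr (hsub' (Finset.mem_coe.mpr (Finset.mem_insert_self a _)))
          have hpX : p * Polynomial.X ^ k ∈ zdSet (Polynomial R) := by
            obtain ⟨y, hy0, hpy⟩ := hpz
            exact ⟨y, hy0, by linear_combination Polynomial.X ^ k * hpy⟩
          refine ⟨Polynomial.C a + p * Polynomial.X ^ k, hadd _ _ hCa hpX, ?_⟩
          intro t ht
          rcases Finset.mem_insert.mp ht with rfl | ht'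
          · refine ⟨0, ?_⟩
            rw [Polynomial.coeff_add, Polynomial.coeff_C_zero, Polynomial.coeff_mul_X_pow']
            simp [hk]
          · obtain ⟨n, hn⟩ := hpc t ht'
            refine ⟨n + k, ?_⟩
            rw [Polynomial.coeff_add, Polynomial.coeff_mul_X_pow, Polynomial.coeff_C]
            simp [hk, hn]
      obtain ⟨p, hpz, hpc⟩ := claim T (fun t ht => hsub (hT ▸ Ideal.subset_span ht))
      obtain ⟨a, ha0, hac⟩ := mccoy_coeff hpz
      refine ⟨a, ha0, ?_⟩
      intro x hx
      rw [← hT] at hx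
      refine Submodule.span_induction ?_ ?_ ?_ ?_ hx
      · intro t ht
        obtain ⟨n, hn⟩ := hpc t ht
        rw [← hn]; exact hac n
      · exact mul_zero a
      · intro x y _ _ hx hy
        rw [mul_add, hx, hy, add_zero]
      · intro c x _ hx
        rw [smul_eq_mul, mul_left_comm, hx, mul_zero]
    · -- Z(R) is an ideal
      refine ⟨{ carrier := zdSet R,
                zero_mem' := ⟨1, one_ne_zero, zero_mul 1⟩,
                add_mem' := ?_,
                smul_mem' := ?_ }, rfl⟩
      · intro a b ha hb
        have : Polynomial.C (a + b) ∈ zdSet (Polynomial R) := by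
          rw [map_add]; exact hadd _ _ (constZd.mpr ha) (constZd.mpr hb)
        exact constZd.mp this
      · rintro c a ⟨y, hy, hxy⟩
        exact ⟨y, hy, by rw [smul_eq_mul, mul_assoc, hxy, mul_zero]⟩
    · -- Z(R)² ≠ 0
      obtain ⟨p, q, hp, hq, hprod⟩ := pairs
      obtain ⟨rp, hrp, hrpc⟩ := mccoy_coeff hp
      obtain ⟨rq, hrq, hrqc⟩ := mccoy_coeff hq
      have : ∃ n, (p * q).coeff n ≠ 0 := by
        by_contra hco
        push_neg at hco
        exact hprod (Polynomial.ext_iff.mpr (by simpa using hco))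
      obtain ⟨n, hn⟩ := this
      rw [Polynomial.coeff_mul] at hn
      obtain ⟨ij, _, hij⟩ := Finset.exists_ne_zero_of_sum_ne_zero hn
      exact ⟨p.coeff ij.1, ⟨rp, hrp, by rw [mul_comm]; exact hrpc ij.1⟩,
        q.coeff ij.2, ⟨rq, hrq, by rw [mul_comm]; exact hrqc ij.2⟩, hij⟩
  · left
    push_neg at hadd
    obtain ⟨p, q, hp, hq, hsum⟩ := hadd
    exact caseB dag hp hq hsum

end Stmt17


theorem stmt17 (R : Type u) [CommRing R] [Nontrivial R]
    (hnd : ¬ IsDomain R) :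
    (zdGraph (Polynomial R)).ediam = 2 ↔
      ((∃ (D₁ : Type u) (D₂ : Type u) (_ : CommRing D₁) (_ : CommRing D₂)
      (_ : IsDomain D₁) (_ : IsDomain D₂) (f : R →+* D₁ × D₂), Function.Injective f) ∨
       ((∀ I : Ideal R, I.FG → (I : Set R) ⊆ zdSet R →
      ∃ a : R, a ≠ 0 ∧ ∀ x ∈ I, a * x = 0) ∧
        (∃ I : Ideal R, (I : Set R) = zdSet R) ∧ (∃ x ∈ zdSet R, ∃ y ∈ zdSet R, x * y ≠ 0))) := by
  rw [Stmt17.ediam_iff]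
  constructor
  · rintro ⟨dag, pairs⟩
    exact Stmt17.backward dag pairs
  · rintro (⟨D₁, D₂, _, _, _, _, φ, hφ⟩ | ⟨hMc, hI, x, hx, y, hy, hxy⟩)
    · exact ⟨Stmt17.caseI_dag φ hφ, Stmt17.caseI_pairs φ hφ hnd⟩
    · exact ⟨Stmt17.caseII_dag hMc hI, Stmt17.caseII_pairs hx hy hxy⟩
end

section
/- Let R be a nontrivial commutative ring with identity that is not an integral domain. Then diam(Γ(R[X])) = 3 if and only if (R is not a McCoy ring or Z(R) is not an ideal of R) and R is not isomorphic to a subring of a product of two integral domains. -/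
universe u

open Polynomial

namespace Stmt18Aux

variable {R : Type*} [CommRing R]

lemma mem_zdStar {x : R} : x ∈ zdStar R ↔ x ≠ 0 ∧ ∃ y, y ≠ 0 ∧ x * y = 0 := Iff.rfl

/-- McCoy's theorem, coefficientwise form. -/
lemma mccoy {f g : R[X]} (hg : g ≠ 0) (hfg : f * g = 0) :
    ∃ c : R, c ≠ 0 ∧ ∀ n, c * f.coeff n = 0 := by
  have hf : f ∉ nonZeroDivisors R[X] := by
    intro hmem
    exact hg ((mem_nonZeroDivisors_iff.mp hmem).2 g (by rwa [mul_comm] at hfg))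
  obtain ⟨a, ha, h⟩ := Polynomial.notMem_nonZeroDivisors_iff.1 hf
  refine ⟨a, ha, fun n => ?_⟩
  have := congrArg (fun p : R[X] => p.coeff n) h
  simpa [Polynomial.coeff_smul, smul_eq_mul] using this

/-- Common constant annihilator for two polynomials with a common polynomial annihilator. -/
lemma mccoy_pair {f g h : R[X]} (hh : h ≠ 0) (h1 : f * h = 0) (h2 : g * h = 0) :
    ∃ c : R, c ≠ 0 ∧ (∀ n, c * f.coeff n = 0) ∧ (∀ n, c * g.coeff n = 0) := by
  set N := f.natDegree + 1 with hN
  have key : (f + g * X ^ N) * h = 0 := by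
    rw [add_mul, h1, zero_add, mul_right_comm, h2, zero_mul]
  obtain ⟨c, hc, hco⟩ := mccoy hh key
  have hcoeff : ∀ n, (f + g * X ^ N).coeff n = f.coeff n + (if N ≤ n then g.coeff (n - N) else 0) := by
    intro n; rw [coeff_add, coeff_mul_X_pow']
  refine ⟨c, hc, fun n => ?_, fun n => ?_⟩
  · by_cases hn : n < N
    · have := hco n
      rw [hcoeff n, if_neg (by omega), add_zero] at this
      exact this
    · rw [coeff_eq_zero_of_natDegree_lt (by omega), mul_zero]
  · have := hco (N + n)
    rw [hcoeff (N + n), if_pos (by omega),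
      coeff_eq_zero_of_natDegree_lt (by omega), zero_add] at this
    simpa using this

section Plist

/-- Polynomial with coefficients `u 0, …, u (m-1)` at exponents `e 0 < e 1 < …`. -/
noncomputable def plist (u : ℕ → R) (m : ℕ) (e : ℕ → ℕ) : R[X] :=
  ∑ i ∈ Finset.range m, Polynomial.monomial (e i) (u i)

lemma coeff_plist (u : ℕ → R) (m : ℕ) (e : ℕ → ℕ) (he : ∀ i j, e i = e j → i = j)
    {i₀ : ℕ} (hi₀ : i₀ < m) : (plist u m e).coeff (e i₀) = u i₀ := by
  rw [plist, Polynomial.finset_sum_coeff]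
  rw [Finset.sum_eq_single i₀]
  · rw [Polynomial.coeff_monomial, if_pos rfl]
  · intro b _ hb
    rw [Polynomial.coeff_monomial, if_neg (fun hc => hb (he b i₀ hc))]
  · intro hmem; exact absurd (Finset.mem_range.mpr hi₀) hmem

lemma plist_ne_zero (u : ℕ → R) (m : ℕ) (e : ℕ → ℕ) (he : ∀ i j, e i = e j → i = j)
    {i₀ : ℕ} (hi₀ : i₀ < m) (hu : u i₀ ≠ 0) : plist u m e ≠ 0 := by
  intro h
  apply hu
  rw [← coeff_plist u m e he hi₀, h, Polynomial.coeff_zero]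

lemma plist_mul_C (u : ℕ → R) (m : ℕ) (e : ℕ → ℕ) {c : R}
    (hc : ∀ i < m, c * u i = 0) : plist u m e * C c = 0 := by
  rw [plist, Finset.sum_mul]
  apply Finset.sum_eq_zero
  intro i hi
  rw [mul_comm, Polynomial.C_mul_monomial, hc i (Finset.mem_range.mp hi),
    Polynomial.monomial_zero_right]

lemma coeff_plist_mul (u v : ℕ → R) (m k : ℕ) {i₀ j₀ : ℕ} (hi₀ : i₀ < m) (hj₀ : j₀ < k) :
    (plist u m (fun i => (k+1) * i) * plist v k (fun j => j)).coeff ((k+1) * i₀ + j₀)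
      = u i₀ * v j₀ := by
  have huniq : ∀ i j, j < k + 1 → (k+1) * i + j = (k+1) * i₀ + j₀ → i = i₀ ∧ j = j₀ := by
    intro i j hj hsum
    have hj₀' : j₀ < k + 1 := by omega
    have h1 : ((k+1) * i + j) / (k+1) = i := by
      rw [Nat.mul_add_div (by omega), Nat.div_eq_of_lt hj, add_zero]
    have h2 : ((k+1) * i₀ + j₀) / (k+1) = i₀ := by
      rw [Nat.mul_add_div (by omega), Nat.div_eq_of_lt hj₀', add_zero]
    have hi : i = i₀ := by rw [← h1, ← h2, hsum]
    constructor
    · exact hi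
    · subst hi; omega
  have hN : ∀ i ∈ Finset.range m, ∀ j ∈ Finset.range k, ¬(i = i₀ ∧ j = j₀) →
      (Polynomial.monomial ((k+1)*i + j) (u i * v j)).coeff ((k+1)*i₀ + j₀) = 0 := by
    intro i hi j hj hne
    rw [Polynomial.coeff_monomial, if_neg]
    intro hc
    obtain ⟨h1, h2⟩ := huniq i j (Nat.lt_succ_of_lt (Finset.mem_range.mp hj)) hc
    exact hne ⟨h1, h2⟩
  rw [plist, plist, Finset.sum_mul_sum]
  simp only [Polynomial.monomial_mul_monomial]
  rw [Polynomial.finset_sum_coeff]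
  rw [Finset.sum_eq_single_of_mem i₀ (Finset.mem_range.mpr hi₀)
    (fun b hb hbne => by
      rw [Polynomial.finset_sum_coeff]
      exact Finset.sum_eq_zero (fun j hj => hN b hb j hj (by simp [hbne])))]
  rw [Polynomial.finset_sum_coeff]
  rw [Finset.sum_eq_single_of_mem j₀ (Finset.mem_range.mpr hj₀)
    (fun b hb hbne => hN i₀ (Finset.mem_range.mpr hi₀) b hb (by simp [hbne]))]
  rw [Polynomial.coeff_monomial, if_pos rfl]

end Plist


section Graph

lemma walk_le_two_cases {V : Type*} {G : SimpleGraph V} {u v : V} (w : G.Walk u v)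
    (h : w.length ≤ 2) : u = v ∨ G.Adj u v ∨ ∃ m, G.Adj u m ∧ G.Adj m v := by
  cases w with
  | nil => exact Or.inl rfl
  | cons hadj w' =>
    cases w' with
    | nil => exact Or.inr (Or.inl hadj)
    | cons hadj' w'' =>
      cases w'' with
      | nil => exact Or.inr (Or.inr ⟨_, hadj, hadj'⟩)
      | cons _ _ => simp [SimpleGraph.Walk.length_cons] at h

/-- Anderson–Livingston: the zero-divisor graph has diameter at most 3. -/
lemma edist_le_three {S : Type*} [CommRing S] (p q : ↥(zdStar S)) :
    (zdGraph S).edist p q ≤ 3 := by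
  obtain ⟨hx0, a, ha0, hxa⟩ := p.2
  obtain ⟨hy0, b, hb0, hyb⟩ := q.2
  by_cases hpq : p = q
  · rw [hpq, SimpleGraph.edist_self]; exact bot_le
  by_cases hxy : p.1 * q.1 = 0
  · have hadj : (zdGraph S).Adj p q := ⟨fun h => hpq (Subtype.ext h), hxy⟩
    refine le_trans (SimpleGraph.edist_le (SimpleGraph.Walk.cons hadj SimpleGraph.Walk.nil)) ?_
    simp only [SimpleGraph.Walk.length_cons, SimpleGraph.Walk.length_nil]
    norm_num
  by_cases hay : a * q.1 = 0
  · have hax : p.1 ≠ a := fun h => hxy (by rw [h]; exact hay)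
    have hay' : a ≠ q.1 := fun h => hxy (by rw [← h]; exact hxa)
    have hA : a ∈ zdStar S := ⟨ha0, p.1, hx0, by rw [mul_comm]; exact hxa⟩
    have h1 : (zdGraph S).Adj p ⟨a, hA⟩ := ⟨hax, hxa⟩
    have h2 : (zdGraph S).Adj ⟨a, hA⟩ q := ⟨hay', hay⟩
    refine le_trans (SimpleGraph.edist_le
      (SimpleGraph.Walk.cons h1 (SimpleGraph.Walk.cons h2 SimpleGraph.Walk.nil))) ?_
    simp only [SimpleGraph.Walk.length_cons, SimpleGraph.Walk.length_nil]
    norm_num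
  by_cases hbx : b * p.1 = 0
  · have hxb : p.1 ≠ b := fun h => hxy (by rw [h, mul_comm]; exact hyb)
    have hby : b ≠ q.1 := fun h => hxy (by rw [← h, mul_comm]; exact hbx)
    have hB : b ∈ zdStar S := ⟨hb0, q.1, hy0, by rw [mul_comm]; exact hyb⟩
    have h1 : (zdGraph S).Adj p ⟨b, hB⟩ := ⟨hxb, by rw [mul_comm]; exact hbx⟩
    have h2 : (zdGraph S).Adj ⟨b, hB⟩ q := ⟨hby, by rw [mul_comm]; exact hyb⟩
    refine le_trans (SimpleGraph.edist_le
      (SimpleGraph.Walk.cons h1 (SimpleGraph.Walk.cons h2 SimpleGraph.Walk.nil))) ?_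
    simp only [SimpleGraph.Walk.length_cons, SimpleGraph.Walk.length_nil]
    norm_num
  by_cases hab : a * b = 0
  · -- path p - a - b - q
    have hxa' : p.1 ≠ a := fun h => hbx (by rw [h, mul_comm]; exact hab)
    have hab' : a ≠ b := fun h => hay (by rw [h, mul_comm]; exact hyb)
    have hby : b ≠ q.1 := fun h => hay (by rw [← h]; exact hab)
    have hA : a ∈ zdStar S := ⟨ha0, p.1, hx0, by rw [mul_comm]; exact hxa⟩
    have hB : b ∈ zdStar S := ⟨hb0, q.1, hy0, by rw [mul_comm]; exact hyb⟩
    have h1 : (zdGraph S).Adj p ⟨a, hA⟩ := ⟨hxa', hxa⟩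
    have h2 : (zdGraph S).Adj (⟨a, hA⟩ : ↥(zdStar S)) ⟨b, hB⟩ := ⟨hab', hab⟩
    have h3 : (zdGraph S).Adj ⟨b, hB⟩ q := ⟨hby, by rw [mul_comm]; exact hyb⟩
    refine le_trans (SimpleGraph.edist_le (SimpleGraph.Walk.cons h1
      (SimpleGraph.Walk.cons h2 (SimpleGraph.Walk.cons h3 SimpleGraph.Walk.nil)))) ?_
    simp only [SimpleGraph.Walk.length_cons, SimpleGraph.Walk.length_nil]
    norm_num
  · -- middle vertex a * b
    have hxab : p.1 * (a * b) = 0 := by rw [← mul_assoc, hxa, zero_mul]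
    have haby : (a * b) * q.1 = 0 := by rw [mul_assoc, mul_comm b, hyb, mul_zero]
    have hne1 : p.1 ≠ a * b := fun h => hxy (by rw [h]; exact haby)
    have hne2 : a * b ≠ q.1 := fun h => hxy (by rw [← h]; exact hxab)
    have hAB : a * b ∈ zdStar S := ⟨hab, p.1, hx0, by rw [mul_comm]; exact hxab⟩
    have h1 : (zdGraph S).Adj p ⟨a * b, hAB⟩ := ⟨hne1, hxab⟩
    have h2 : (zdGraph S).Adj ⟨a * b, hAB⟩ q := ⟨hne2, haby⟩
    refine le_trans (SimpleGraph.edist_le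
      (SimpleGraph.Walk.cons h1 (SimpleGraph.Walk.cons h2 SimpleGraph.Walk.nil))) ?_
    simp only [SimpleGraph.Walk.length_cons, SimpleGraph.Walk.length_nil]
    norm_num

lemma common_ann (Hd : ∀ p q : ↥(zdStar R[X]), (zdGraph R[X]).edist p q ≤ 2)
    {f g : R[X]} (hf : f ∈ zdStar R[X]) (hg : g ∈ zdStar R[X]) (hfg : f * g ≠ 0) :
    ∃ c : R, c ≠ 0 ∧ (∀ n, c * f.coeff n = 0) ∧ (∀ n, c * g.coeff n = 0) := by
  by_cases hfeq : f = g
  · obtain ⟨hf0, w, hw0, hfw⟩ := hf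
    obtain ⟨c, hc, hco⟩ := mccoy hw0 hfw
    subst hfeq
    exact ⟨c, hc, hco, hco⟩
  · have h2 := Hd ⟨f, hf⟩ ⟨g, hg⟩
    have hnt : (zdGraph R[X]).edist ⟨f, hf⟩ ⟨g, hg⟩ ≠ ⊤ := by
      intro h; rw [h] at h2; exact absurd h2 (by norm_num)
    obtain ⟨w, hw⟩ := (SimpleGraph.reachable_of_edist_ne_top hnt).exists_walk_length_eq_edist
    have hlen : w.length ≤ 2 := by
      rw [← Nat.cast_le (α := ℕ∞), hw]; exact h2
    rcases walk_le_two_cases w hlen with heq | hadj | ⟨M, h1, h2'⟩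
    · exact absurd (congrArg Subtype.val heq) hfeq
    · exact absurd hadj.2 hfg
    · exact mccoy_pair M.2.1 h1.2 (by rw [mul_comm]; exact h2'.2)

/-- The key ring-level consequence of `diam ≤ 2`. -/
lemma hc_of (Hd : ∀ p q : ↥(zdStar R[X]), (zdGraph R[X]).edist p q ≤ 2)
    (u : ℕ → R) (m : ℕ) (v : ℕ → R) (k : ℕ)
    (h1 : ∃ c, c ≠ 0 ∧ ∀ i < m, c * u i = 0) (h2 : ∃ c, c ≠ 0 ∧ ∀ j < k, c * v j = 0)
    (h3 : ∃ i, i < m ∧ ∃ j, j < k ∧ u i * v j ≠ 0) :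
    ∃ c, c ≠ 0 ∧ (∀ i < m, c * u i = 0) ∧ (∀ j < k, c * v j = 0) := by
  obtain ⟨c₁, hc₁, hk₁⟩ := h1
  obtain ⟨c₂, hc₂, hk₂⟩ := h2
  obtain ⟨i₀, hi₀, j₀, hj₀, hprod⟩ := h3
  have he₁ : ∀ i j : ℕ, (fun i => (k+1) * i) i = (fun i => (k+1) * i) j → i = j := by
    intro i j h
    exact Nat.eq_of_mul_eq_mul_left (by omega) h
  have he₂ : ∀ i j : ℕ, (fun j => j) i = (fun j => j) j → i = j := fun _ _ h => h
  have hf0 : plist u m (fun i => (k+1) * i) ≠ 0 :=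
    plist_ne_zero _ _ _ he₁ hi₀ (left_ne_zero_of_mul hprod)
  have hg0 : plist v k (fun j => j) ≠ 0 :=
    plist_ne_zero _ _ _ he₂ hj₀ (right_ne_zero_of_mul hprod)
  have hCne1 : (C c₁ : R[X]) ≠ 0 := by simpa using hc₁
  have hCne2 : (C c₂ : R[X]) ≠ 0 := by simpa using hc₂
  have hf : plist u m (fun i => (k+1) * i) ∈ zdStar R[X] :=
    ⟨hf0, C c₁, hCne1, plist_mul_C _ _ _ hk₁⟩
  have hg : plist v k (fun j => j) ∈ zdStar R[X] :=
    ⟨hg0, C c₂, hCne2, plist_mul_C _ _ _ hk₂⟩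
  have hfg : plist u m (fun i => (k+1) * i) * plist v k (fun j => j) ≠ 0 := by
    intro h
    apply hprod
    have hcm := coeff_plist_mul u v m k hi₀ hj₀
    rw [h, Polynomial.coeff_zero] at hcm
    exact hcm.symm
  obtain ⟨c, hc, hcf, hcg⟩ := common_ann Hd hf hg hfg
  refine ⟨c, hc, fun i hi => ?_, fun j hj => ?_⟩
  · have := hcf ((k+1) * i)
    rwa [coeff_plist u m (fun i => (k+1) * i) he₁ hi] at this
  · have := hcg j
    rwa [coeff_plist v k (fun j => j) he₂ hj] at this

end Graph


section Easy

lemma ext_mul_C_eq_zero {f : R[X]} {a : R} (h : ∀ n, a * f.coeff n = 0) : f * C a = 0 := by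
  ext n
  rw [Polynomial.coeff_mul_C, Polynomial.coeff_zero, mul_comm]
  exact h n

/-- If `R` is McCoy and `Z(R)` is an ideal, then `Γ(R[X])` has diameter at most 2. -/
lemma edist_le_two_of_mccoy_ideal [Nontrivial R]
    (hM : ∀ I : Ideal R, I.FG → (I : Set R) ⊆ zdSet R → ∃ a : R, a ≠ 0 ∧ ∀ x ∈ I, a * x = 0)
    (hI : ∃ I : Ideal R, (I : Set R) = zdSet R)
    (p q : ↥(zdStar R[X])) : (zdGraph R[X]).edist p q ≤ 2 := by
  classical
  obtain ⟨I₀, hI₀⟩ := hI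
  obtain ⟨hp0, wp, hwp0, hpwp⟩ := p.2
  obtain ⟨hq0, wq, hwq0, hqwq⟩ := q.2
  obtain ⟨c₁, hc₁, hcp⟩ := mccoy hwp0 hpwp
  obtain ⟨c₂, hc₂, hcq⟩ := mccoy hwq0 hqwq
  set s : Finset R := (p.1.support.image fun n => p.1.coeff n) ∪
    (q.1.support.image fun n => q.1.coeff n) with hs
  have hssub : (↑s : Set R) ⊆ zdSet R := by
    intro x hx
    rcases Finset.mem_union.mp hx with h | h
    · obtain ⟨n, _, rfl⟩ := Finset.mem_image.mp h
      exact ⟨c₁, hc₁, by rw [mul_comm]; exact hcp n⟩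
    · obtain ⟨n, _, rfl⟩ := Finset.mem_image.mp h
      exact ⟨c₂, hc₂, by rw [mul_comm]; exact hcq n⟩
  have hIsub : (↑(Ideal.span (↑s : Set R)) : Set R) ⊆ zdSet R := by
    rw [← hI₀]
    exact_mod_cast Ideal.span_le.mpr (by rw [hI₀]; exact hssub)
  obtain ⟨a, ha0, hann⟩ := hM (Ideal.span ↑s) ⟨s, rfl⟩ hIsub
  have haf : ∀ n, a * p.1.coeff n = 0 := by
    intro n
    by_cases hn : p.1.coeff n = 0
    · rw [hn, mul_zero]
    · exact hann _ (Ideal.subset_span (Finset.mem_union_left _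
        (Finset.mem_image.mpr ⟨n, Polynomial.mem_support_iff.mpr hn, rfl⟩)))
  have hag : ∀ n, a * q.1.coeff n = 0 := by
    intro n
    by_cases hn : q.1.coeff n = 0
    · rw [hn, mul_zero]
    · exact hann _ (Ideal.subset_span (Finset.mem_union_right _
        (Finset.mem_image.mpr ⟨n, Polynomial.mem_support_iff.mpr hn, rfl⟩)))
  have hfa : p.1 * C a = 0 := ext_mul_C_eq_zero haf
  have hga : q.1 * C a = 0 := ext_mul_C_eq_zero hag
  by_cases hpq : p = q
  · rw [hpq, SimpleGraph.edist_self]; exact bot_le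
  by_cases h0 : p.1 * q.1 = 0
  · refine le_trans (SimpleGraph.edist_le (SimpleGraph.Walk.cons
      (⟨fun h => hpq (Subtype.ext h), h0⟩ : (zdGraph R[X]).Adj p q) SimpleGraph.Walk.nil)) ?_
    show ((1 : ℕ) : ℕ∞) ≤ 2
    norm_num
  · have hCa : (C a : R[X]) ≠ 0 := by simpa using ha0
    have hM' : (C a : R[X]) ∈ zdStar R[X] := ⟨hCa, p.1, hp0, by rw [mul_comm]; exact hfa⟩
    have hne1 : p.1 ≠ C a := fun h => h0 (by rw [h, mul_comm]; exact hga)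
    have hne2 : (C a : R[X]) ≠ q.1 := fun h => h0 (by rw [← h]; exact hfa)
    have h1 : (zdGraph R[X]).Adj p ⟨C a, hM'⟩ := ⟨hne1, hfa⟩
    have h2 : (zdGraph R[X]).Adj ⟨C a, hM'⟩ q := ⟨hne2, by rw [mul_comm]; exact hga⟩
    refine le_trans (SimpleGraph.edist_le
      (SimpleGraph.Walk.cons h1 (SimpleGraph.Walk.cons h2 SimpleGraph.Walk.nil))) ?_
    simp only [SimpleGraph.Walk.length_cons, SimpleGraph.Walk.length_nil]
    norm_num

/-- If `R` embeds in a product of two domains, then `Γ(R[X])` has diameter at most 2. -/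
lemma edist_le_two_of_embed {D₁ D₂ : Type*} [CommRing D₁] [CommRing D₂]
    [IsDomain D₁] [IsDomain D₂] (fem : R →+* D₁ × D₂) (hinj : Function.Injective fem)
    (p q : ↥(zdStar R[X])) : (zdGraph R[X]).edist p q ≤ 2 := by
  set f₁ : R →+* D₁ := (RingHom.fst D₁ D₂).comp fem with hf₁
  set f₂ : R →+* D₂ := (RingHom.snd D₁ D₂).comp fem with hf₂
  have hker : ∀ r : R[X], r.map f₁ = 0 → r.map f₂ = 0 → r = 0 := by
    intro r h1 h2
    ext n
    have e1 : f₁ (r.coeff n) = 0 := by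
      rw [← Polynomial.coeff_map, h1, Polynomial.coeff_zero]
    have e2 : f₂ (r.coeff n) = 0 := by
      rw [← Polynomial.coeff_map, h2, Polynomial.coeff_zero]
    have : fem (r.coeff n) = 0 := Prod.ext e1 e2
    have := hinj (by rw [this, map_zero] : fem (r.coeff n) = fem 0)
    simpa using this
  have hmul1 : ∀ r t : R[X], r * t = 0 → r.map f₁ * t.map f₁ = 0 := by
    intro r t h
    rw [← Polynomial.map_mul, h, Polynomial.map_zero]
  have hmul2 : ∀ r t : R[X], r * t = 0 → r.map f₂ * t.map f₂ = 0 := by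
    intro r t h
    rw [← Polynomial.map_mul, h, Polynomial.map_zero]
  have classify : ∀ h : R[X], h ∈ zdStar R[X] →
      (h.map f₁ = 0 ∧ h.map f₂ ≠ 0) ∨ (h.map f₂ = 0 ∧ h.map f₁ ≠ 0) := by
    rintro h ⟨h0, w, hw0, hhw⟩
    have hne : h.map f₁ ≠ 0 ∨ h.map f₂ ≠ 0 := by
      by_contra hc; push_neg at hc; exact h0 (hker h hc.1 hc.2)
    have hwne : w.map f₁ ≠ 0 ∨ w.map f₂ ≠ 0 := by
      by_contra hc; push_neg at hc; exact hw0 (hker w hc.1 hc.2)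
    rcases hwne with hw1 | hw2
    · have h1 : h.map f₁ = 0 := (mul_eq_zero.mp (hmul1 h w hhw)).resolve_right hw1
      exact Or.inl ⟨h1, hne.resolve_left (fun hh => hh h1)⟩
    · have h2 : h.map f₂ = 0 := (mul_eq_zero.mp (hmul2 h w hhw)).resolve_right hw2
      exact Or.inr ⟨h2, hne.resolve_right (fun hh => hh h2)⟩
  by_cases hpq : p = q
  · rw [hpq, SimpleGraph.edist_self]; exact bot_le
  by_cases h0 : p.1 * q.1 = 0
  · refine le_trans (SimpleGraph.edist_le (SimpleGraph.Walk.cons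
      (⟨fun h => hpq (Subtype.ext h), h0⟩ : (zdGraph R[X]).Adj p q) SimpleGraph.Walk.nil)) ?_
    show ((1 : ℕ) : ℕ∞) ≤ 2
    norm_num
  obtain ⟨hp0, wp, hwp0, hpwp⟩ := p.2
  rcases classify p.1 p.2 with ⟨hp1, hp2⟩ | ⟨hp1, hp2⟩ <;>
    rcases classify q.1 q.2 with ⟨hq1, hq2⟩ | ⟨hq1, hq2⟩
  · -- both first-component zero; use p's witness
    have hwpf2 : wp.map f₂ = 0 := (mul_eq_zero.mp (hmul2 p.1 wp hpwp)).resolve_left hp2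
    have hwpf1 : wp.map f₁ ≠ 0 := by
      intro h; exact hwp0 (hker wp h hwpf2)
    have hqwp : q.1 * wp = 0 := hker _
      (by rw [Polynomial.map_mul, hq1, zero_mul])
      (by rw [Polynomial.map_mul, hwpf2, mul_zero])
    have hMv : wp ∈ zdStar R[X] := ⟨hwp0, p.1, hp0, by rw [mul_comm]; exact hpwp⟩
    have hne1 : p.1 ≠ wp := fun h => hp2 (by rw [h]; exact hwpf2)
    have hne2 : wp ≠ q.1 := fun h => hq2 (by rw [← h]; exact hwpf2)
    have h1 : (zdGraph R[X]).Adj p ⟨wp, hMv⟩ := ⟨hne1, hpwp⟩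
    have h2 : (zdGraph R[X]).Adj ⟨wp, hMv⟩ q := ⟨hne2, by rw [mul_comm]; exact hqwp⟩
    refine le_trans (SimpleGraph.edist_le
      (SimpleGraph.Walk.cons h1 (SimpleGraph.Walk.cons h2 SimpleGraph.Walk.nil))) ?_
    simp only [SimpleGraph.Walk.length_cons, SimpleGraph.Walk.length_nil]
    norm_num
  · -- opposite types: p * q = 0, contradiction
    exact absurd (hker _ (by rw [Polynomial.map_mul, hp1, zero_mul])
      (by rw [Polynomial.map_mul, hq1, mul_zero])) h0
  · exact absurd (hker _ (by rw [Polynomial.map_mul, hq1, mul_zero])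
      (by rw [Polynomial.map_mul, hp1, zero_mul])) h0
  · -- both second-component zero
    have hwpf1 : wp.map f₁ = 0 := (mul_eq_zero.mp (hmul1 p.1 wp hpwp)).resolve_left hp2
    have hqwp : q.1 * wp = 0 := hker _
      (by rw [Polynomial.map_mul, hwpf1, mul_zero])
      (by rw [Polynomial.map_mul, hq1, zero_mul])
    have hMv : wp ∈ zdStar R[X] := ⟨hwp0, p.1, hp0, by rw [mul_comm]; exact hpwp⟩
    have hne1 : p.1 ≠ wp := fun h => hp2 (by rw [h]; exact hwpf1)
    have hne2 : wp ≠ q.1 := fun h => hq2 (by rw [← h]; exact hwpf1)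
    have h1 : (zdGraph R[X]).Adj p ⟨wp, hMv⟩ := ⟨hne1, hpwp⟩
    have h2 : (zdGraph R[X]).Adj ⟨wp, hMv⟩ q := ⟨hne2, by rw [mul_comm]; exact hqwp⟩
    refine le_trans (SimpleGraph.edist_le
      (SimpleGraph.Walk.cons h1 (SimpleGraph.Walk.cons h2 SimpleGraph.Walk.nil))) ?_
    simp only [SimpleGraph.Walk.length_cons, SimpleGraph.Walk.length_nil]
    norm_num

end Easy


section Core

/-- The annihilator of a finite family as an ideal. -/
def annList (u : ℕ → R) (m : ℕ) : Ideal R where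
  carrier := {x | ∀ i < m, x * u i = 0}
  add_mem' := fun {a b} ha hb i hi => by rw [add_mul, ha i hi, hb i hi, add_zero]
  zero_mem' := fun i _ => zero_mul _
  smul_mem' := fun r x hx => fun i hi => by
    simp only [smul_eq_mul, mul_assoc, hx i hi, mul_zero]

lemma mem_annList {u : ℕ → R} {m : ℕ} {x : R} : x ∈ annList u m ↔ ∀ i < m, x * u i = 0 :=
  Iff.rfl

/-- Any element with a nonzero annihilator kills one of the two families. -/
lemma reg_aux (Hc : ∀ (u : ℕ → R) (m : ℕ) (v : ℕ → R) (k : ℕ),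
      (∃ c, c ≠ 0 ∧ ∀ i < m, c * u i = 0) → (∃ c, c ≠ 0 ∧ ∀ j < k, c * v j = 0) →
      (∃ i, i < m ∧ ∃ j, j < k ∧ u i * v j ≠ 0) →
      ∃ c, c ≠ 0 ∧ (∀ i < m, c * u i = 0) ∧ (∀ j < k, c * v j = 0))
    (u : ℕ → R) (m : ℕ) (v : ℕ → R) (k : ℕ)
    (E1 : ∃ c, c ≠ 0 ∧ ∀ i < m, c * u i = 0)
    (E2 : ∃ c, c ≠ 0 ∧ ∀ j < k, c * v j = 0)
    (E3 : ∀ c, (∀ i < m, c * u i = 0) → (∀ j < k, c * v j = 0) → c = 0)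
    (x w : R) (hw : w ≠ 0) (hxw : x * w = 0)
    (hxu : ∃ i, i < m ∧ x * u i ≠ 0) (hxv : ∃ j, j < k ∧ x * v j ≠ 0) : False := by
  obtain ⟨i₁, hi₁, hxu'⟩ := hxu
  obtain ⟨j₁, hj₁, hxv'⟩ := hxv
  obtain ⟨c, hc, hcx, hcu⟩ := Hc (fun _ => x) 1 u m
    ⟨w, hw, fun _ _ => by rw [mul_comm]; exact hxw⟩ E1
    ⟨0, one_pos, i₁, hi₁, hxu'⟩
  obtain ⟨c', hc', hcv, hcxu⟩ := Hc v k (fun i => if i = 0 then x else u (i - 1)) (m + 1) E2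
    ⟨c, hc, fun i hi => by
      by_cases h : i = 0
      · simp only [h, if_pos rfl]; exact hcx 0 one_pos
      · simp only [if_neg h]; exact hcu (i - 1) (by omega)⟩
    ⟨j₁, hj₁, 0, by omega, by simpa using fun h => hxv' (by rw [mul_comm]; exact h)⟩
  apply hc'
  refine E3 c' (fun i hi => ?_) hcv
  have := hcxu (i + 1) (by omega)
  simpa using this

/-- The annihilator ideal of the first family is prime. -/
lemma prime_ann (Hc : ∀ (u : ℕ → R) (m : ℕ) (v : ℕ → R) (k : ℕ),
      (∃ c, c ≠ 0 ∧ ∀ i < m, c * u i = 0) → (∃ c, c ≠ 0 ∧ ∀ j < k, c * v j = 0) →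
      (∃ i, i < m ∧ ∃ j, j < k ∧ u i * v j ≠ 0) →
      ∃ c, c ≠ 0 ∧ (∀ i < m, c * u i = 0) ∧ (∀ j < k, c * v j = 0))
    (u : ℕ → R) (m : ℕ) (v : ℕ → R) (k : ℕ)
    (E1 : ∃ c, c ≠ 0 ∧ ∀ i < m, c * u i = 0)
    (E2 : ∃ c, c ≠ 0 ∧ ∀ j < k, c * v j = 0)
    (E3 : ∀ c, (∀ i < m, c * u i = 0) → (∀ j < k, c * v j = 0) → c = 0)
    (E4 : ∃ i, i < m ∧ u i ≠ 0) : (annList u m).IsPrime := by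
  constructor
  · intro htop
    obtain ⟨i, hi, hui⟩ := E4
    have h1 : (1 : R) ∈ annList u m := htop ▸ Submodule.mem_top
    exact hui (by simpa using h1 i hi)
  · intro x y hxy
    by_contra hcon
    push_neg at hcon
    obtain ⟨hx, hy⟩ := hcon
    rw [mem_annList] at hx hy hxy
    push_neg at hx hy
    obtain ⟨i₀, hi₀, hxu⟩ := hx
    obtain ⟨i₁, hi₁, hyu⟩ := hy
    have hx0 : x ≠ 0 := fun h => hxu (by rw [h, zero_mul])
    have hy0 : y ≠ 0 := fun h => hyu (by rw [h, zero_mul])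
    have hyz : y * (x * u i₀) = 0 := by
      have h := hxy i₀ hi₀
      calc y * (x * u i₀) = x * y * u i₀ := by ring
      _ = 0 := h
    have hxz : x * (y * u i₁) = 0 := by
      have h := hxy i₁ hi₁
      calc x * (y * u i₁) = x * y * u i₁ := by ring
      _ = 0 := h
    have hyK : ∀ j < k, y * v j = 0 := by
      by_contra hcK
      push_neg at hcK
      obtain ⟨j, hj, hjv⟩ := hcK
      exact reg_aux Hc u m v k E1 E2 E3 y (x * u i₀) hxu hyz ⟨i₁, hi₁, hyu⟩ ⟨j, hj, hjv⟩
    have hxK : ∀ j < k, x * v j = 0 := by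
      by_contra hcK
      push_neg at hcK
      obtain ⟨j, hj, hjv⟩ := hcK
      exact reg_aux Hc u m v k E1 E2 E3 x (y * u i₁) hyu hxz ⟨i₀, hi₀, hxu⟩ ⟨j, hj, hjv⟩
    have hxy0 : x * y = 0 := by
      refine E3 (x * y) hxy (fun j hj => ?_)
      calc x * y * v j = y * (x * v j) := by ring
      _ = 0 := by rw [hxK j hj, mul_zero]
    obtain ⟨c, hc, hcx, hcu⟩ := Hc (fun _ => x) 1 u m
      ⟨y, hy0, fun _ _ => by rw [mul_comm]; exact hxy0⟩ E1
      ⟨0, one_pos, i₀, hi₀, hxu⟩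
    obtain ⟨c', hc', hw1, hw2⟩ := Hc (fun i => if i = 0 then x else u (i - 1)) (m + 1)
      (fun j => if j = 0 then y else v (j - 1)) (k + 1)
      ⟨c, hc, fun i hi => by
        by_cases h : i = 0
        · simp only [h, if_pos rfl]; exact hcx 0 one_pos
        · simp only [if_neg h]; exact hcu (i - 1) (by omega)⟩
      ⟨x, hx0, fun j hj => by
        by_cases h : j = 0
        · simp only [h, if_pos rfl]; exact hxy0
        · simp only [if_neg h]; exact hxK (j - 1) (by omega)⟩
      ⟨i₁ + 1, by omega, 0, by omega, by
        simpa using fun h => hyu (by rw [mul_comm]; exact h)⟩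
    apply hc'
    refine E3 c' (fun i hi => ?_) (fun j hj => ?_)
    · have := hw1 (i + 1) (by omega)
      simpa using this
    · have := hw2 (j + 1) (by omega)
      simpa using this

/-- From the configuration we obtain two primes with trivial intersection. -/
lemma exists_primes (Hc : ∀ (u : ℕ → R) (m : ℕ) (v : ℕ → R) (k : ℕ),
      (∃ c, c ≠ 0 ∧ ∀ i < m, c * u i = 0) → (∃ c, c ≠ 0 ∧ ∀ j < k, c * v j = 0) →
      (∃ i, i < m ∧ ∃ j, j < k ∧ u i * v j ≠ 0) →
      ∃ c, c ≠ 0 ∧ (∀ i < m, c * u i = 0) ∧ (∀ j < k, c * v j = 0))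
    (u : ℕ → R) (m : ℕ) (v : ℕ → R) (k : ℕ)
    (E1 : ∃ c, c ≠ 0 ∧ ∀ i < m, c * u i = 0)
    (E2 : ∃ c, c ≠ 0 ∧ ∀ j < k, c * v j = 0)
    (E3 : ∀ c, (∀ i < m, c * u i = 0) → (∀ j < k, c * v j = 0) → c = 0)
    (E4 : ∃ i, i < m ∧ u i ≠ 0) (E5 : ∃ j, j < k ∧ v j ≠ 0) :
    ∃ J K : Ideal R, J.IsPrime ∧ K.IsPrime ∧ ∀ x : R, x ∈ J → x ∈ K → x = 0 := by
  have E3' : ∀ c, (∀ j < k, c * v j = 0) → (∀ i < m, c * u i = 0) → c = 0 :=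
    fun c h1 h2 => E3 c h2 h1
  refine ⟨annList u m, annList v k, prime_ann Hc u m v k E1 E2 E3 E4,
    prime_ann Hc v k u m E2 E1 E3' E5, fun x hxJ hxK => ?_⟩
  exact E3 x (mem_annList.mp hxJ) (mem_annList.mp hxK)

end Core


section Config

lemma span_ann (s : Finset R) (c : R) (hc : ∀ x ∈ s, c * x = 0) :
    ∀ x ∈ Ideal.span (↑s : Set R), c * x = 0 := by
  intro x hx
  refine Submodule.span_induction (fun x hxs => hc x (by exact_mod_cast hxs))
    (mul_zero c) (fun a b _ _ ha hb => by rw [mul_add, ha, hb, add_zero])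
    (fun r a _ ha => by rw [smul_eq_mul, mul_comm r a, ← mul_assoc, ha, zero_mul]) hx

/-- If the zero divisors are closed under addition they form an ideal. -/
def zdIdeal [Nontrivial R] (h : ∀ a ∈ zdSet R, ∀ b ∈ zdSet R, a + b ∈ zdSet R) : Ideal R where
  carrier := zdSet R
  add_mem' := fun {a b} ha hb => h a ha b hb
  zero_mem' := ⟨1, one_ne_zero, zero_mul 1⟩
  smul_mem' := fun r x hx => by
    obtain ⟨y, hy, hxy⟩ := hx
    exact ⟨y, hy, by rw [smul_eq_mul, mul_assoc, hxy, mul_zero]⟩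

lemma config_of_not_ideal [Nontrivial R]
    (hnI : ¬ ∃ I : Ideal R, (I : Set R) = zdSet R) :
    ∃ (u : ℕ → R) (m : ℕ) (v : ℕ → R) (k : ℕ),
      (∃ c, c ≠ 0 ∧ ∀ i < m, c * u i = 0) ∧ (∃ c, c ≠ 0 ∧ ∀ j < k, c * v j = 0) ∧
      (∀ c, (∀ i < m, c * u i = 0) → (∀ j < k, c * v j = 0) → c = 0) ∧
      (∃ i, i < m ∧ u i ≠ 0) ∧ (∃ j, j < k ∧ v j ≠ 0) := by
  have hadd : ¬ ∀ a ∈ zdSet R, ∀ b ∈ zdSet R, a + b ∈ zdSet R :=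
    fun h => hnI ⟨zdIdeal h, rfl⟩
  push_neg at hadd
  obtain ⟨a, ha, b, hb, hab⟩ := hadd
  obtain ⟨ya, hya, haya⟩ := ha
  obtain ⟨yb, hyb, hbyb⟩ := hb
  refine ⟨fun _ => a, 1, fun _ => b, 1,
    ⟨ya, hya, fun _ _ => by rw [mul_comm]; exact haya⟩,
    ⟨yb, hyb, fun _ _ => by rw [mul_comm]; exact hbyb⟩, ?_, ?_, ?_⟩
  · intro c h1 h2
    by_contra hc
    exact hab ⟨c, hc, by
      rw [add_mul, mul_comm a c, mul_comm b c, h1 0 one_pos, h2 0 one_pos, add_zero]⟩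
  · refine ⟨0, one_pos, fun h => hab ?_⟩
    rw [show a = 0 from h, zero_add]
    exact ⟨yb, hyb, hbyb⟩
  · refine ⟨0, one_pos, fun h => hab ?_⟩
    rw [show b = 0 from h, add_zero]
    exact ⟨ya, hya, haya⟩

lemma config_of_not_mccoy [Nontrivial R]
    (hM : ¬ ∀ I : Ideal R, I.FG → (I : Set R) ⊆ zdSet R →
      ∃ a : R, a ≠ 0 ∧ ∀ x ∈ I, a * x = 0) :
    ∃ (u : ℕ → R) (m : ℕ) (v : ℕ → R) (k : ℕ),
      (∃ c, c ≠ 0 ∧ ∀ i < m, c * u i = 0) ∧ (∃ c, c ≠ 0 ∧ ∀ j < k, c * v j = 0) ∧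
      (∀ c, (∀ i < m, c * u i = 0) → (∀ j < k, c * v j = 0) → c = 0) ∧
      (∃ i, i < m ∧ u i ≠ 0) ∧ (∃ j, j < k ∧ v j ≠ 0) := by
  classical
  push_neg at hM
  obtain ⟨I, hFG, hsub, hann⟩ := hM
  obtain ⟨s₀, hs₀⟩ := hFG
  have hex : ∃ n, ∃ s : Finset R, s.card = n ∧ (↑s : Set R) ⊆ zdSet R ∧
      ∀ c : R, c ≠ 0 → ∃ x ∈ s, c * x ≠ 0 := by
    refine ⟨s₀.card, s₀, rfl, ?_, ?_⟩
    · intro x hx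
      exact hsub (by rw [← hs₀]; exact Ideal.subset_span hx)
    · intro c hc
      obtain ⟨x, hxI, hcx⟩ := hann c hc
      by_contra hcon
      push_neg at hcon
      exact hcx (span_ann s₀ c hcon x (by rwa [hs₀]))
  obtain ⟨s, hcard, hsubZ, hann0⟩ := Nat.find_spec hex
  set n := Nat.find hex with hn
  have hmin : ∀ d, d < n → ¬ ∃ s : Finset R, s.card = d ∧ (↑s : Set R) ⊆ zdSet R ∧
      ∀ c : R, c ≠ 0 → ∃ x ∈ s, c * x ≠ 0 := fun d hd => Nat.find_min hex hd
  have hn2 : 2 ≤ n := by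
    by_contra hlt
    push_neg at hlt
    have hcases : n = 0 ∨ n = 1 := by omega
    rcases hcases with h | h
    · have h0 : s = ∅ := Finset.card_eq_zero.mp (hcard.trans h)
      obtain ⟨x, hx, _⟩ := hann0 1 one_ne_zero
      rw [h0] at hx
      exact absurd hx (Finset.notMem_empty x)
    · obtain ⟨a, rfl⟩ := Finset.card_eq_one.mp (hcard.trans h)
      obtain ⟨y, hy0, hay⟩ := hsubZ (Finset.mem_coe.mpr (Finset.mem_singleton_self a))
      obtain ⟨x, hx, hyx⟩ := hann0 y hy0
      rw [Finset.mem_singleton] at hx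
      subst hx
      exact hyx (by rw [mul_comm]; exact hay)
  have hnpos : 0 < s.card := by omega
  obtain ⟨a, hamem⟩ := Finset.card_pos.mp hnpos
  have hcard' : (s.erase a).card = n - 1 := by
    rw [Finset.card_erase_of_mem hamem, hcard]
  have hsub' : (↑(s.erase a) : Set R) ⊆ zdSet R := fun x hx =>
    hsubZ (Finset.mem_coe.mpr (Finset.mem_of_mem_erase (Finset.mem_coe.mp hx)))
  have E1' : ∃ c, c ≠ 0 ∧ ∀ x ∈ s.erase a, c * x = 0 := by
    by_contra hcon
    push_neg at hcon
    exact hmin (n - 1) (by omega) ⟨s.erase a, hcard', hsub', fun c hc => hcon c hc⟩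
  have ha0 : a ≠ 0 := by
    intro h
    refine hmin (n - 1) (by omega) ⟨s.erase a, hcard', hsub', fun c hc => ?_⟩
    obtain ⟨x, hx, hcx⟩ := hann0 c hc
    refine ⟨x, Finset.mem_erase.mpr ⟨?_, hx⟩, hcx⟩
    intro hxa
    exact hcx (by rw [hxa, h, mul_zero])
  have hs'ne : ∃ x ∈ s.erase a, x ≠ 0 := by
    by_contra hcon
    push_neg at hcon
    refine hmin 1 (by omega) ⟨{a}, Finset.card_singleton a, ?_, fun c hc => ?_⟩
    · intro x hx
      rw [Finset.coe_singleton, Set.mem_singleton_iff] at hx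
      subst hx
      exact hsubZ (Finset.mem_coe.mpr hamem)
    · obtain ⟨x, hx, hcx⟩ := hann0 c hc
      by_cases hxa : x = a
      · exact ⟨a, Finset.mem_singleton_self a, by rwa [← hxa]⟩
      · exact absurd (by rw [hcon x (Finset.mem_erase.mpr ⟨hxa, hx⟩), mul_zero]) hcx
  -- convert the finset to an indexed family
  have hfun : ∃ (m : ℕ) (u : ℕ → R), (∀ i, i < m → u i ∈ s.erase a) ∧
      (∀ x ∈ s.erase a, ∃ i, i < m ∧ u i = x) := by
    refine ⟨(s.erase a).toList.length, fun i => (s.erase a).toList.getD i 0, ?_, ?_⟩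
    · intro i hi
      show (s.erase a).toList.getD i 0 ∈ s.erase a
      rw [List.getD_eq_getElem _ _ hi]
      exact Finset.mem_toList.mp (List.getElem_mem _)
    · intro x hx
      obtain ⟨i, hi, hx'⟩ := List.mem_iff_getElem.mp (Finset.mem_toList.mpr hx)
      refine ⟨i, hi, ?_⟩
      show (s.erase a).toList.getD i 0 = x
      rw [List.getD_eq_getElem _ _ hi]
      exact hx'
  obtain ⟨m, u, hu1, hu2⟩ := hfun
  -- assemble the configuration
  obtain ⟨c₁, hc₁, hc₁kill⟩ := E1'
  obtain ⟨ya, hya0, haya⟩ := hsubZ (Finset.mem_coe.mpr hamem)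
  refine ⟨u, m, fun _ => a, 1,
    ⟨c₁, hc₁, fun i hi => hc₁kill (u i) (hu1 i hi)⟩,
    ⟨ya, hya0, fun _ _ => by rw [mul_comm]; exact haya⟩, ?_, ?_, ?_⟩
  · intro c hcu hca
    by_contra hc0
    obtain ⟨x, hx, hcx⟩ := hann0 c hc0
    by_cases hxa : x = a
    · exact hcx (by rw [hxa]; exact hca 0 one_pos)
    · obtain ⟨i, hi, hui⟩ := hu2 x (Finset.mem_erase.mpr ⟨hxa, hx⟩)
      exact hcx (by rw [← hui]; exact hcu i hi)
  · obtain ⟨x, hx, hx0⟩ := hs'ne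
    obtain ⟨i, hi, hui⟩ := hu2 x hx
    exact ⟨i, hi, by rw [hui]; exact hx0⟩
  · exact ⟨0, one_pos, ha0⟩

end Config


end Stmt18Aux

open Stmt18Aux in
theorem stmt18 (R : Type u) [CommRing R] [Nontrivial R]
    (hnd : ¬ IsDomain R) :
    (zdGraph (Polynomial R)).ediam = 3 ↔
      (((¬ (∀ I : Ideal R, I.FG → (I : Set R) ⊆ zdSet R →
      ∃ a : R, a ≠ 0 ∧ ∀ x ∈ I, a * x = 0)) ∨ ¬ (∃ I : Ideal R, (I : Set R) = zdSet R)) ∧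
       ¬ (∃ (D₁ : Type u) (D₂ : Type u) (_ : CommRing D₁) (_ : CommRing D₂)
      (_ : IsDomain D₁) (_ : IsDomain D₂) (f : R →+* D₁ × D₂), Function.Injective f)) := by
  classical
  constructor
  · intro h3
    by_contra hn
    have hle : ∀ p q : ↥(zdStar (Polynomial R)), (zdGraph (Polynomial R)).edist p q ≤ 2 := by
      by_cases hA : (¬ (∀ I : Ideal R, I.FG → (I : Set R) ⊆ zdSet R →
          ∃ a : R, a ≠ 0 ∧ ∀ x ∈ I, a * x = 0)) ∨ ¬ (∃ I : Ideal R, (I : Set R) = zdSet R)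
      · have hEmb : ∃ (D₁ : Type u) (D₂ : Type u) (_ : CommRing D₁) (_ : CommRing D₂)
            (_ : IsDomain D₁) (_ : IsDomain D₂) (f : R →+* D₁ × D₂), Function.Injective f := by
          by_contra hB
          exact hn ⟨hA, hB⟩
        obtain ⟨D₁, D₂, _, _, _, _, fem, hinj⟩ := hEmb
        exact edist_le_two_of_embed fem hinj
      · push_neg at hA
        obtain ⟨hM, hI⟩ := hA
        exact edist_le_two_of_mccoy_ideal hM hI
    have h2 : (zdGraph (Polynomial R)).ediam ≤ 2 := SimpleGraph.ediam_le_of_edist_le hle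
    rw [h3] at h2
    norm_num at h2
  · rintro ⟨hA, hB⟩
    have hnot : ¬ ∀ p q : ↥(zdStar (Polynomial R)),
        (zdGraph (Polynomial R)).edist p q ≤ 2 := by
      intro Hd
      have Hc := fun u m v k h1 h2 h3 => hc_of Hd u m v k h1 h2 h3
      have hconf : ∃ (u : ℕ → R) (m : ℕ) (v : ℕ → R) (k : ℕ),
          (∃ c, c ≠ 0 ∧ ∀ i < m, c * u i = 0) ∧ (∃ c, c ≠ 0 ∧ ∀ j < k, c * v j = 0) ∧
          (∀ c, (∀ i < m, c * u i = 0) → (∀ j < k, c * v j = 0) → c = 0) ∧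
          (∃ i, i < m ∧ u i ≠ 0) ∧ (∃ j, j < k ∧ v j ≠ 0) := by
        rcases hA with h | h
        · exact config_of_not_mccoy h
        · exact config_of_not_ideal h
      obtain ⟨u, m, v, k, E1, E2, E3, E4, E5⟩ := hconf
      obtain ⟨J, K, hJ, hK, hJK⟩ := exists_primes Hc u m v k E1 E2 E3 E4 E5
      apply hB
      haveI := hJ
      haveI := hK
      refine ⟨R ⧸ J, R ⧸ K, inferInstance, inferInstance, inferInstance, inferInstance,
        RingHom.prod (Ideal.Quotient.mk J) (Ideal.Quotient.mk K), ?_⟩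
      rw [injective_iff_map_eq_zero]
      intro x hx
      have h1 : Ideal.Quotient.mk J x = 0 := congrArg Prod.fst hx
      have h2 : Ideal.Quotient.mk K x = 0 := congrArg Prod.snd hx
      exact hJK x (Ideal.Quotient.eq_zero_iff_mem.mp h1) (Ideal.Quotient.eq_zero_iff_mem.mp h2)
    push_neg at hnot
    obtain ⟨p, q, hgt⟩ := hnot
    have h3le : (3 : ℕ∞) ≤ (zdGraph (Polynomial R)).edist p q := by
      have h := Order.add_one_le_of_lt hgt
      have h21 : (2 : ℕ∞) + 1 = 3 := by norm_num
      rwa [h21] at h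
    refine le_antisymm (SimpleGraph.ediam_le_of_edist_le fun u v => edist_le_three u v) ?_
    exact le_trans h3le SimpleGraph.edist_le_ediam
end

section
/- Let n > 1 be a composite integer. Then: diam(Γ(ℤ/nℤ)) = 0 if and only if n = 4; diam(Γ(ℤ/nℤ)) = 1 if and only if n = p² for an odd prime p; diam(Γ(ℤ/nℤ)) = 2 if and only if n = p^k for some prime p and integer k > 2, or n is a product of two distinct primes; and diam(Γ(ℤ/nℤ)) = 3 if and only if n is neither a power of a prime nor a product of two distinct primes. -/
universe u

open SimpleGraph

section general
variable {R : Type*} [CommRing R]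

lemma zdGraph_adj {x y : zdStar R} : (zdGraph R).Adj x y ↔ x.1 ≠ y.1 ∧ x.1 * y.1 = 0 := Iff.rfl

lemma enat_two_le {a : ℕ∞} (h0 : a ≠ 0) (h1 : a ≠ 1) : 2 ≤ a := by
  induction a using ENat.recTopCoe with
  | top => exact le_top
  | coe n =>
    have h0' : n ≠ 0 := by exact_mod_cast h0
    have h1' : n ≠ 1 := by exact_mod_cast h1
    exact_mod_cast (by omega : 2 ≤ n)

lemma enat_three_le {a : ℕ∞} (h0 : a ≠ 0) (h1 : a ≠ 1) (h2 : a ≠ 2) : 3 ≤ a := by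
  induction a using ENat.recTopCoe with
  | top => exact le_top
  | coe n =>
    have h0' : n ≠ 0 := by exact_mod_cast h0
    have h1' : n ≠ 1 := by exact_mod_cast h1
    have h2' : n ≠ 2 := by exact_mod_cast h2
    exact_mod_cast (by omega : 3 ≤ n)

lemma zd_edist_le_one {x y : zdStar R} (h : (x : R) * y = 0) :
    (zdGraph R).edist x y ≤ 1 := by
  rcases eq_or_ne x y with rfl | hne
  · simp [edist_self]
  · exact le_of_eq (edist_eq_one_iff_adj.mpr (zdGraph_adj.mpr ⟨Subtype.coe_ne_coe.mpr hne, h⟩))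

lemma zd_edist_le_two {x y w : zdStar R} (h1 : (x : R) * w = 0) (h2 : (w : R) * y = 0) :
    (zdGraph R).edist x y ≤ 2 := by
  by_cases hxy0 : (x : R) * y = 0
  · exact (zd_edist_le_one hxy0).trans one_le_two
  rcases eq_or_ne x y with rfl | hne
  · simp [edist_self]
  have hwx : (x : R) ≠ w := fun hc => hxy0 (by rw [hc]; exact h2)
  have hwy : (w : R) ≠ y := fun hc => hxy0 (by rw [← hc]; exact h1)
  have a1 : (zdGraph R).Adj x w := zdGraph_adj.mpr ⟨hwx, h1⟩
  have a2 : (zdGraph R).Adj w y := zdGraph_adj.mpr ⟨hwy, h2⟩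
  have := SimpleGraph.edist_le (Walk.cons a1 a2.toWalk)
  simpa using this

lemma zd_edist_le_three {x y a b : zdStar R} (h1 : (x : R) * a = 0) (h2 : (a : R) * b = 0)
    (h3 : (b : R) * y = 0) : (zdGraph R).edist x y ≤ 3 := by
  by_cases hxa : (x : R) = a
  · exact (zd_edist_le_two (show (x:R) * b = 0 by rw [hxa]; exact h2) h3).trans (by norm_num)
  by_cases hby : (b : R) = y
  · exact (zd_edist_le_two h1 (show (a:R) * y = 0 by rw [← hby]; exact h2)).trans (by norm_num)
  by_cases hab : (a : R) = b
  · exact (zd_edist_le_two h1 (show (a:R) * y = 0 by rw [hab]; exact h3)).trans (by norm_num)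
  have a1 : (zdGraph R).Adj x a := zdGraph_adj.mpr ⟨hxa, h1⟩
  have a2 : (zdGraph R).Adj a b := zdGraph_adj.mpr ⟨hab, h2⟩
  have a3 : (zdGraph R).Adj b y := zdGraph_adj.mpr ⟨hby, h3⟩
  have := SimpleGraph.edist_le (Walk.cons a1 (Walk.cons a2 a3.toWalk))
  simpa using this

lemma zd_ediam_le_three : (zdGraph R).ediam ≤ 3 := by
  apply ediam_le_of_edist_le
  intro x y
  obtain ⟨hx0, ax, hax0, hax⟩ := x.2
  obtain ⟨hy0, ay, hay0, hay⟩ := y.2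
  have hax_mem : ax ∈ zdStar R := ⟨hax0, x.1, hx0, by rw [mul_comm]; exact hax⟩
  have hay_mem : ay ∈ zdStar R := ⟨hay0, y.1, hy0, by rw [mul_comm]; exact hay⟩
  by_cases hab : ax * ay = 0
  · exact zd_edist_le_three (a := ⟨ax, hax_mem⟩) (b := ⟨ay, hay_mem⟩) hax hab
      (by rw [mul_comm]; exact hay)
  · have hw_mem : ax * ay ∈ zdStar R :=
      ⟨hab, x.1, hx0, by rw [mul_comm, ← mul_assoc, hax, zero_mul]⟩
    have h1 : (x : R) * (ax * ay) = 0 := by rw [← mul_assoc, hax, zero_mul]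
    have h2 : (ax * ay) * (y : R) = 0 := by
      rw [mul_assoc, mul_comm ay (y : R), hay, mul_zero]
    exact (zd_edist_le_two (w := ⟨ax * ay, hw_mem⟩) h1 h2).trans (by norm_num)

lemma zd_two_le_edist {x y : zdStar R} (hne : x ≠ y) (h : (x : R) * y ≠ 0) :
    2 ≤ (zdGraph R).edist x y := by
  apply enat_two_le
  · simp only [ne_eq, edist_eq_zero_iff]; exact hne
  · simp only [ne_eq, edist_eq_one_iff_adj]; exact fun hc => h (zdGraph_adj.mp hc).2

lemma zd_three_le_edist {x y : zdStar R} (hne : x ≠ y) (h : (x : R) * y ≠ 0)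
    (hw : ∀ w : zdStar R, (x : R) * w = 0 → (w : R) * y = 0 → False) :
    3 ≤ (zdGraph R).edist x y := by
  apply enat_three_le
  · simp only [ne_eq, edist_eq_zero_iff]; exact hne
  · simp only [ne_eq, edist_eq_one_iff_adj]; exact fun hc => h (zdGraph_adj.mp hc).2
  · intro hc
    obtain ⟨p, hp⟩ := exists_walk_of_edist_ne_top (by rw [hc]; exact (by decide : (2:ℕ∞) ≠ ⊤))
    rw [hc] at hp
    have hlen : p.length = 2 := by exact_mod_cast hp
    cases p with
    | nil => simp at hlen
    | cons h1 q =>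
      cases q with
      | nil => simp at hlen
      | cons h2 r =>
        cases r with
        | nil => exact hw _ (zdGraph_adj.mp h1).2 (zdGraph_adj.mp h2).2
        | cons h3 s => simp [Walk.length_cons] at hlen
end general

section zmod
variable {n : ℕ}

lemma zmod_cast_mul_eq_zero_iff (a b : ℕ) :
    (a : ZMod n) * (b : ZMod n) = 0 ↔ n ∣ a * b := by
  rw [← Nat.cast_mul, ZMod.natCast_eq_zero_iff]

lemma zmod_cast_ne_zero (a : ℕ) (h : ¬ n ∣ a) : (a : ZMod n) ≠ 0 := by
  rw [Ne, ZMod.natCast_eq_zero_iff]; exact h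

lemma zmod_cast_ne_cast {a b : ℕ} (ha : a < n) (hb : b < n) (h : a ≠ b) :
    (a : ZMod n) ≠ (b : ZMod n) := fun hc =>
  h (by rw [← ZMod.val_natCast_of_lt ha, ← ZMod.val_natCast_of_lt hb, hc])

lemma mem_zdStar_of (a b : ℕ) (ha0 : ¬ n ∣ a) (hb0 : ¬ n ∣ b) (hab : n ∣ a * b) :
    (a : ZMod n) ∈ zdStar (ZMod n) :=
  ⟨zmod_cast_ne_zero a ha0, (b : ZMod n), zmod_cast_ne_zero b hb0,
    (zmod_cast_mul_eq_zero_iff a b).mpr hab⟩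

lemma zmod_mul_eq_zero_iff [NeZero n] (x y : ZMod n) :
    x * y = 0 ↔ n ∣ x.val * y.val := by
  rw [← zmod_cast_mul_eq_zero_iff, ZMod.natCast_zmod_val, ZMod.natCast_zmod_val]

lemma zmod_eq_zero_iff_val [NeZero n] (x : ZMod n) : x = 0 ↔ n ∣ x.val := by
  rw [← ZMod.natCast_eq_zero_iff, ZMod.natCast_zmod_val]

lemma mem_zdStar_pp {p k : ℕ} (hp : p.Prime) (hk : 0 < k) (x : ZMod (p ^ k)) :
    x ∈ zdStar (ZMod (p ^ k)) ↔ x ≠ 0 ∧ p ∣ x.val := by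
  haveI : NeZero (p ^ k) := ⟨pow_ne_zero k hp.pos.ne'⟩
  constructor
  · rintro ⟨hx0, y, hy0, hxy⟩
    refine ⟨hx0, ?_⟩
    by_contra hpd
    have hcop : Nat.Coprime (p ^ k) x.val :=
      Nat.Coprime.pow_left k (hp.coprime_iff_not_dvd.mpr hpd)
    have hdvd : p ^ k ∣ x.val * y.val := (zmod_mul_eq_zero_iff x y).mp hxy
    have : p ^ k ∣ y.val := hcop.dvd_of_dvd_mul_left hdvd
    exact hy0 ((zmod_eq_zero_iff_val y).mpr this)
  · rintro ⟨hx0, m, hm⟩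
    refine ⟨hx0, (p ^ (k - 1) : ℕ), ?_, ?_⟩
    · apply zmod_cast_ne_zero
      intro hc
      have h1 : p ^ (k - 1) < p ^ k := Nat.pow_lt_pow_right hp.one_lt (by omega)
      have h2 : 0 < p ^ (k - 1) := pow_pos hp.pos _
      exact absurd (Nat.le_of_dvd h2 hc) (by omega)
    · nth_rewrite 1 [← ZMod.natCast_zmod_val x]
      rw [zmod_cast_mul_eq_zero_iff, hm]
      calc p ^ k = p ^ (k - 1) * p := by rw [← pow_succ]; congr 1; omega
      _ ∣ (p * m) * p ^ (k - 1) := ⟨m, by ring⟩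

lemma mem_zdStar_pq {p q : ℕ} (hp : p.Prime) (hq : q.Prime) (x : ZMod (p * q)) :
    x ∈ zdStar (ZMod (p * q)) ↔ x ≠ 0 ∧ (p ∣ x.val ∨ q ∣ x.val) := by
  haveI : NeZero (p * q) := ⟨Nat.mul_ne_zero hp.pos.ne' hq.pos.ne'⟩
  constructor
  · rintro ⟨hx0, y, hy0, hxy⟩
    refine ⟨hx0, ?_⟩
    by_contra hpd
    push_neg at hpd
    have hcop : Nat.Coprime (p * q) x.val :=
      Nat.Coprime.mul (hp.coprime_iff_not_dvd.mpr hpd.1) (hq.coprime_iff_not_dvd.mpr hpd.2)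
    have hdvd : p * q ∣ x.val * y.val := (zmod_mul_eq_zero_iff x y).mp hxy
    exact hy0 ((zmod_eq_zero_iff_val y).mpr (hcop.dvd_of_dvd_mul_left hdvd))
  · rintro ⟨hx0, hd⟩
    refine ⟨hx0, ?_⟩
    rcases hd with ⟨m, hm⟩ | ⟨m, hm⟩
    · refine ⟨(q : ℕ), zmod_cast_ne_zero q (fun hc => ?_), ?_⟩
      · exact absurd (Nat.le_of_dvd hq.pos hc)
          (by nlinarith [hp.two_le, hq.pos])
      · nth_rewrite 1 [← ZMod.natCast_zmod_val x]
        rw [zmod_cast_mul_eq_zero_iff, hm]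
        exact ⟨m, by ring⟩
    · refine ⟨(p : ℕ), zmod_cast_ne_zero p (fun hc => ?_), ?_⟩
      · exact absurd (Nat.le_of_dvd hp.pos hc)
          (by nlinarith [hq.two_le, hp.pos])
      · nth_rewrite 1 [← ZMod.natCast_zmod_val x]
        rw [zmod_cast_mul_eq_zero_iff, hm]
        exact ⟨m, by ring⟩
end zmod

section cases

lemma caseA : (zdGraph (ZMod 4)).ediam = 0 := by
  haveI : Subsingleton (zdStar (ZMod 4)) := by
    constructor
    rintro ⟨x, hx⟩ ⟨y, hy⟩
    have key : ∀ z : ZMod 4, (z ≠ 0 ∧ ∃ w : ZMod 4, w ≠ 0 ∧ z * w = 0) → z = 2 := by decide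
    exact Subtype.ext ((key x hx).trans (key y hy).symm)
  exact ediam_eq_zero_of_subsingleton

lemma caseB {p : ℕ} (hp : p.Prime) (hp2 : p ≠ 2) : (zdGraph (ZMod (p ^ 2))).ediam = 1 := by
  haveI : NeZero (p ^ 2) := ⟨pow_ne_zero 2 hp.pos.ne'⟩
  have hp3 : 3 ≤ p := by have := hp.two_le; omega
  have hplt : p < p ^ 2 := by nlinarith
  have h2plt : 2 * p < p ^ 2 := by nlinarith
  have hnd1 : ¬ p ^ 2 ∣ p := fun hc => absurd (Nat.le_of_dvd (by omega) hc) (by omega)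
  have hnd2 : ¬ p ^ 2 ∣ 2 * p := fun hc => by
    rw [pow_two] at hc
    have : p ∣ 2 := (Nat.mul_dvd_mul_iff_right hp.pos).mp hc
    exact absurd (Nat.le_of_dvd (by omega) this) (by omega)
  have mem1 : ((p : ℕ) : ZMod (p ^ 2)) ∈ zdStar (ZMod (p ^ 2)) :=
    mem_zdStar_of p p hnd1 hnd1 ⟨1, by ring⟩
  have mem2 : ((2 * p : ℕ) : ZMod (p ^ 2)) ∈ zdStar (ZMod (p ^ 2)) :=
    mem_zdStar_of (2 * p) p hnd2 hnd1 ⟨2, by ring⟩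
  haveI : Nontrivial (zdStar (ZMod (p ^ 2))) :=
    ⟨⟨⟨_, mem1⟩, ⟨_, mem2⟩, fun hc =>
      (zmod_cast_ne_cast hplt h2plt (by omega)) (congrArg Subtype.val hc)⟩⟩
  rw [SimpleGraph.ediam_eq_one]
  ext x y
  simp only [SimpleGraph.top_adj]
  constructor
  · exact fun h => Subtype.coe_ne_coe.mp (zdGraph_adj.mp h).1
  · intro hne
    refine zdGraph_adj.mpr ⟨Subtype.coe_ne_coe.mpr hne, ?_⟩
    obtain ⟨hx0, a, ha⟩ := (mem_zdStar_pp hp two_pos x.1).mp x.2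
    obtain ⟨hy0, b, hb⟩ := (mem_zdStar_pp hp two_pos y.1).mp y.2
    rw [zmod_mul_eq_zero_iff, ha, hb]
    exact ⟨a * b, by ring⟩

lemma caseC1 {p k : ℕ} (hp : p.Prime) (hk : 2 < k) : (zdGraph (ZMod (p ^ k))).ediam = 2 := by
  obtain ⟨e, rfl⟩ : ∃ e, k = e + 1 := ⟨k - 1, by omega⟩
  have he2 : 2 ≤ e := by omega
  haveI : NeZero (p ^ (e + 1)) := ⟨pow_ne_zero _ hp.pos.ne'⟩
  have hp1 := hp.one_lt
  have hpe_pos : 0 < p ^ e := pow_pos hp.pos _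
  have hpe_lt : p ^ e < p ^ (e + 1) := Nat.pow_lt_pow_right hp.one_lt (by omega)
  have hp_lt : p < p ^ (e + 1) := by
    calc p = p ^ 1 := (pow_one p).symm
    _ < p ^ (e + 1) := Nat.pow_lt_pow_right hp.one_lt (by omega)
  have hnd_pe : ¬ p ^ (e + 1) ∣ p ^ e := fun hc =>
    absurd (Nat.le_of_dvd hpe_pos hc) (by omega)
  have hnd_p : ¬ p ^ (e + 1) ∣ p := fun hc =>
    absurd (Nat.le_of_dvd hp.pos hc) (by omega)
  have hdvd_ppe : p ^ (e + 1) ∣ p ^ e * p := ⟨1, by ring⟩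
  have memw : ((p ^ e : ℕ) : ZMod (p ^ (e + 1))) ∈ zdStar (ZMod (p ^ (e + 1))) :=
    mem_zdStar_of (p ^ e) p hnd_pe hnd_p hdvd_ppe
  apply le_antisymm
  · apply ediam_le_of_edist_le
    intro x y
    obtain ⟨hx0, a, ha⟩ := (mem_zdStar_pp hp (by omega) x.1).mp x.2
    obtain ⟨hy0, b, hb⟩ := (mem_zdStar_pp hp (by omega) y.1).mp y.2
    have hxw : x.1 * ((p ^ e : ℕ) : ZMod (p ^ (e + 1))) = 0 := by
      nth_rewrite 1 [← ZMod.natCast_zmod_val x.1]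
      rw [zmod_cast_mul_eq_zero_iff, ha]
      exact ⟨a, by ring⟩
    have hwy : ((p ^ e : ℕ) : ZMod (p ^ (e + 1))) * y.1 = 0 := by
      nth_rewrite 1 [← ZMod.natCast_zmod_val y.1]
      rw [zmod_cast_mul_eq_zero_iff, hb]
      exact ⟨b, by ring⟩
    exact zd_edist_le_two (w := ⟨_, memw⟩) hxw hwy
  · have hlt_y : p + p ^ e < p ^ (e + 1) := by
      have h1 : p < p ^ e := by
        calc p = p ^ 1 := (pow_one p).symm
        _ < p ^ e := Nat.pow_lt_pow_right hp.one_lt (by omega)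
      have h2 : 2 * p ^ e ≤ p * p ^ e := Nat.mul_le_mul_right _ hp.two_le
      have h3 : p * p ^ e = p ^ (e + 1) := by ring
      omega
    have hnd_y : ¬ p ^ (e + 1) ∣ (p + p ^ e) := fun hc =>
      absurd (Nat.le_of_dvd (by omega) hc) (by omega)
    have hdvd_y : p ^ (e + 1) ∣ (p + p ^ e) * p ^ e := by
      have : (p + p ^ e) * p ^ e = p ^ (e + 1) + p ^ (2 * e) := by ring
      rw [this]
      exact dvd_add dvd_rfl (pow_dvd_pow p (by omega))
    have memx : ((p : ℕ) : ZMod (p ^ (e + 1))) ∈ zdStar (ZMod (p ^ (e + 1))) :=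
      mem_zdStar_of p (p ^ e) hnd_p hnd_pe ⟨1, by ring⟩
    have memy : ((p + p ^ e : ℕ) : ZMod (p ^ (e + 1))) ∈ zdStar (ZMod (p ^ (e + 1))) :=
      mem_zdStar_of (p + p ^ e) (p ^ e) hnd_y hnd_pe hdvd_y
    have hne : (⟨_, memx⟩ : zdStar (ZMod (p ^ (e + 1)))) ≠ ⟨_, memy⟩ := fun hc =>
      (zmod_cast_ne_cast hp_lt hlt_y (by omega)) (congrArg Subtype.val hc)
    have hmul : ((p : ℕ) : ZMod (p ^ (e + 1))) * ((p + p ^ e : ℕ) : ZMod (p ^ (e + 1))) ≠ 0 := by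
      rw [Ne, zmod_cast_mul_eq_zero_iff]
      intro hc
      have h1 : p * (p + p ^ e) = p ^ 2 + p ^ (e + 1) := by ring
      rw [h1] at hc
      have h2 : p ^ (e + 1) ∣ p ^ 2 := by
        have := Nat.dvd_sub hc (dvd_refl (p ^ (e + 1)))
        rwa [Nat.add_sub_cancel] at this
      have h3 : p ^ 2 < p ^ (e + 1) := Nat.pow_lt_pow_right hp.one_lt (by omega)
      exact absurd (Nat.le_of_dvd (by positivity) h2) (by omega)
    calc (2 : ℕ∞) ≤ (zdGraph (ZMod (p ^ (e + 1)))).edist ⟨_, memx⟩ ⟨_, memy⟩ :=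
          zd_two_le_edist hne hmul
    _ ≤ _ := edist_le_ediam

lemma caseC2aux {p q : ℕ} (hp : p.Prime) (hq : q.Prime) (hne : p ≠ q) (hq2 : 2 < q) :
    (zdGraph (ZMod (p * q))).ediam = 2 := by
  haveI : NeZero (p * q) := ⟨Nat.mul_ne_zero hp.pos.ne' hq.pos.ne'⟩
  have hp2 := hp.two_le
  have hplt : p < p * q := by nlinarith
  have hqlt : q < p * q := by nlinarith
  have h2plt : 2 * p < p * q := by nlinarith
  have hnd_p : ¬ p * q ∣ p := fun hc => absurd (Nat.le_of_dvd hp.pos hc) (by omega)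
  have hnd_q : ¬ p * q ∣ q := fun hc => absurd (Nat.le_of_dvd hq.pos hc) (by omega)
  have memp : ((p : ℕ) : ZMod (p * q)) ∈ zdStar (ZMod (p * q)) :=
    mem_zdStar_of p q hnd_p hnd_q dvd_rfl
  have memq : ((q : ℕ) : ZMod (p * q)) ∈ zdStar (ZMod (p * q)) :=
    mem_zdStar_of q p hnd_q hnd_p ⟨1, by ring⟩
  apply le_antisymm
  · apply ediam_le_of_edist_le
    intro x y
    obtain ⟨hx0, hdx⟩ := (mem_zdStar_pq hp hq x.1).mp x.2
    obtain ⟨hy0, hdy⟩ := (mem_zdStar_pq hp hq y.1).mp y.2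
    rcases hdx with ⟨a, ha⟩ | ⟨a, ha⟩ <;> rcases hdy with ⟨b, hb⟩ | ⟨b, hb⟩
    · -- both multiples of p; middle vertex q
      refine zd_edist_le_two (w := ⟨_, memq⟩) ?_ ?_
      · nth_rewrite 1 [← ZMod.natCast_zmod_val x.1]
        rw [zmod_cast_mul_eq_zero_iff, ha]; exact ⟨a, by ring⟩
      · nth_rewrite 1 [← ZMod.natCast_zmod_val y.1]
        rw [zmod_cast_mul_eq_zero_iff, hb]; exact ⟨b, by ring⟩
    · -- x mult of p, y mult of q : adjacent-ish
      refine (zd_edist_le_one ?_).trans one_le_two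
      nth_rewrite 1 [← ZMod.natCast_zmod_val x.1]
      nth_rewrite 1 [← ZMod.natCast_zmod_val y.1]
      rw [zmod_cast_mul_eq_zero_iff, ha, hb]; exact ⟨a * b, by ring⟩
    · refine (zd_edist_le_one ?_).trans one_le_two
      nth_rewrite 1 [← ZMod.natCast_zmod_val x.1]
      nth_rewrite 1 [← ZMod.natCast_zmod_val y.1]
      rw [zmod_cast_mul_eq_zero_iff, ha, hb]; exact ⟨a * b, by ring⟩
    · -- both multiples of q; middle vertex p
      refine zd_edist_le_two (w := ⟨_, memp⟩) ?_ ?_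
      · nth_rewrite 1 [← ZMod.natCast_zmod_val x.1]
        rw [zmod_cast_mul_eq_zero_iff, ha]; exact ⟨a, by ring⟩
      · nth_rewrite 1 [← ZMod.natCast_zmod_val y.1]
        rw [zmod_cast_mul_eq_zero_iff, hb]; exact ⟨b, by ring⟩
  · have hnd_2p : ¬ p * q ∣ 2 * p := fun hc => by
      have h1 : q * p ∣ 2 * p := by rwa [mul_comm p q] at hc
      have : q ∣ 2 := (Nat.mul_dvd_mul_iff_right hp.pos).mp h1
      exact absurd (Nat.le_of_dvd (by omega) this) (by omega)
    have mem2p : ((2 * p : ℕ) : ZMod (p * q)) ∈ zdStar (ZMod (p * q)) :=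
      mem_zdStar_of (2 * p) q hnd_2p hnd_q ⟨2, by ring⟩
    have hne' : (⟨_, memp⟩ : zdStar (ZMod (p * q))) ≠ ⟨_, mem2p⟩ := fun hc =>
      (zmod_cast_ne_cast hplt h2plt (by omega)) (congrArg Subtype.val hc)
    have hmul : ((p : ℕ) : ZMod (p * q)) * ((2 * p : ℕ) : ZMod (p * q)) ≠ 0 := by
      rw [Ne, zmod_cast_mul_eq_zero_iff]
      intro hc
      have h1 : p * (2 * p) = (2 * p) * p := by ring
      have h2 : q ∣ 2 * p := by
        have h3 : q * p ∣ (2 * p) * p := by rw [← h1]; rw [mul_comm p q] at hc; exact hc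
        exact (Nat.mul_dvd_mul_iff_right hp.pos).mp h3
      rcases (Nat.Prime.dvd_mul hq).mp h2 with h | h
      · exact absurd (Nat.le_of_dvd (by omega) h) (by omega)
      · exact hne ((Nat.prime_dvd_prime_iff_eq hq hp).mp h).symm
    calc (2 : ℕ∞) ≤ (zdGraph (ZMod (p * q))).edist ⟨_, memp⟩ ⟨_, mem2p⟩ :=
          zd_two_le_edist hne' hmul
    _ ≤ _ := edist_le_ediam

lemma caseC2 {p q : ℕ} (hp : p.Prime) (hq : q.Prime) (hne : p ≠ q) :
    (zdGraph (ZMod (p * q))).ediam = 2 := by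
  by_cases hq2 : 2 < q
  · exact caseC2aux hp hq hne hq2
  · have hq2' : q = 2 := by have := hq.two_le; omega
    have hp2 : 2 < p := by have := hp.two_le; omega
    rw [mul_comm p q]
    exact caseC2aux hq hp hne.symm hp2

lemma caseD {n : ℕ} (hn : 1 < n)
    (hnpp : ¬ ∃ p k : ℕ, p.Prime ∧ 0 < k ∧ n = p ^ k)
    (hnpq : ¬ ∃ p q : ℕ, p.Prime ∧ q.Prime ∧ p ≠ q ∧ n = p * q) :
    (zdGraph (ZMod n)).ediam = 3 := by
  haveI : NeZero n := ⟨by omega⟩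
  have hn0 : n ≠ 0 := by omega
  set p := n.minFac with hpdef
  have hp : p.Prime := Nat.minFac_prime (by omega)
  have hpn : p ∣ n := Nat.minFac_dvd n
  set m := ordCompl[p] n with hmdef
  have hm1 : m ≠ 1 := by
    intro hc
    have := Nat.ordProj_mul_ordCompl_eq_self n p
    rw [← hmdef, hc, mul_one] at this
    exact hnpp ⟨p, n.factorization p, hp, hp.factorization_pos_of_dvd hn0 hpn, this.symm⟩
  have hm0 : m ≠ 0 := (Nat.ordCompl_pos p hn0).ne'
  set q := m.minFac with hqdef
  have hq : q.Prime := Nat.minFac_prime hm1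
  have hqm : q ∣ m := Nat.minFac_dvd m
  have hqn : q ∣ n := hqm.trans (Nat.ordCompl_dvd n p)
  have hne : p ≠ q := by
    intro hc
    exact Nat.not_dvd_ordCompl hp hn0 (show p ∣ m by rw [hc]; exact hqm)
  have hcop : Nat.Coprime p q := (Nat.coprime_primes hp hq).mpr hne
  have hpq_dvd : p * q ∣ n := Nat.Coprime.mul_dvd_of_dvd_of_dvd hcop hpn hqn
  have hpq_ne : p * q ≠ n := fun hc => hnpq ⟨p, q, hp, hq, hne, hc.symm⟩
  have hpq_lt : p * q < n := lt_of_le_of_ne (Nat.le_of_dvd (by omega) hpq_dvd) hpq_ne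
  have hp2 := hp.two_le
  have hq2 := hq.two_le
  have hplt : p < n := by nlinarith
  have hqlt : q < n := by nlinarith
  have hnd_p : ¬ n ∣ p := fun hc => absurd (Nat.le_of_dvd hp.pos hc) (by omega)
  have hnd_q : ¬ n ∣ q := fun hc => absurd (Nat.le_of_dvd hq.pos hc) (by omega)
  have hdp : p ∣ n := hpn
  have hnp_pos : 0 < n / p := Nat.div_pos (Nat.le_of_dvd (by omega) hdp) hp.pos
  have hnp_lt : n / p < n := Nat.div_lt_self (by omega) hp.one_lt
  have hnd_np : ¬ n ∣ n / p := fun hc => absurd (Nat.le_of_dvd hnp_pos hc) (by omega)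
  have hnq_pos : 0 < n / q := Nat.div_pos (Nat.le_of_dvd (by omega) hqn) hq.pos
  have hnq_lt : n / q < n := Nat.div_lt_self (by omega) hq.one_lt
  have hnd_nq : ¬ n ∣ n / q := fun hc => absurd (Nat.le_of_dvd hnq_pos hc) (by omega)
  have memp : ((p : ℕ) : ZMod n) ∈ zdStar (ZMod n) :=
    mem_zdStar_of p (n / p) hnd_p hnd_np ⟨1, by rw [Nat.mul_div_cancel' hdp, mul_one]⟩
  have memq : ((q : ℕ) : ZMod n) ∈ zdStar (ZMod n) :=
    mem_zdStar_of q (n / q) hnd_q hnd_nq ⟨1, by rw [Nat.mul_div_cancel' hqn, mul_one]⟩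
  have hne' : (⟨_, memp⟩ : zdStar (ZMod n)) ≠ ⟨_, memq⟩ := fun hc =>
    (zmod_cast_ne_cast hplt hqlt hne) (congrArg Subtype.val hc)
  have hmul : ((p : ℕ) : ZMod n) * ((q : ℕ) : ZMod n) ≠ 0 := by
    rw [Ne, zmod_cast_mul_eq_zero_iff]
    exact fun hc => absurd (Nat.le_of_dvd (by positivity) hc) (by omega)
  have h3 : 3 ≤ (zdGraph (ZMod n)).edist ⟨_, memp⟩ ⟨_, memq⟩ := by
    apply zd_three_le_edist hne' hmul
    intro w hxw hwy
    have h1 : n ∣ p * w.1.val := by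
      rw [← zmod_cast_mul_eq_zero_iff, ZMod.natCast_zmod_val]; exact hxw
    have h2 : n ∣ q * w.1.val := by
      rw [← zmod_cast_mul_eq_zero_iff, ZMod.natCast_zmod_val]
      rw [mul_comm]; exact hwy
    have hg : Nat.gcd (p * w.1.val) (q * w.1.val) = w.1.val := by
      rw [Nat.gcd_mul_right, hcop, one_mul]
    have hnw : n ∣ w.1.val := hg ▸ Nat.dvd_gcd h1 h2
    exact w.2.1 ((zmod_eq_zero_iff_val w.1).mpr hnw)
  apply le_antisymm zd_ediam_le_three
  calc (3 : ℕ∞) ≤ (zdGraph (ZMod n)).edist ⟨_, memp⟩ ⟨_, memq⟩ := h3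
  _ ≤ _ := edist_le_ediam

end cases

section assemble

lemma classify {n : ℕ} (hn : 1 < n) (hnp : ¬ n.Prime) :
    n = 4 ∨ (∃ p : ℕ, p.Prime ∧ p ≠ 2 ∧ n = p ^ 2) ∨
    ((∃ p k : ℕ, p.Prime ∧ 2 < k ∧ n = p ^ k) ∨
     (∃ p q : ℕ, p.Prime ∧ q.Prime ∧ p ≠ q ∧ n = p * q)) ∨
    ((¬ ∃ p k : ℕ, p.Prime ∧ 0 < k ∧ n = p ^ k) ∧
     ¬ ∃ p q : ℕ, p.Prime ∧ q.Prime ∧ p ≠ q ∧ n = p * q) := by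
  by_cases hpp : ∃ p k : ℕ, p.Prime ∧ 0 < k ∧ n = p ^ k
  · obtain ⟨p, k, hp, hk, rfl⟩ := hpp
    have hk2 : 2 ≤ k := by
      by_contra hc
      push_neg at hc
      have hk1 : k = 1 := by omega
      subst hk1
      rw [pow_one] at hnp
      exact hnp hp
    by_cases hk3 : 2 < k
    · exact Or.inr (Or.inr (Or.inl (Or.inl ⟨p, k, hp, hk3, rfl⟩)))
    · have hk2' : k = 2 := by omega
      subst hk2'
      by_cases hp2 : p = 2
      · subst hp2; left; norm_num
      · exact Or.inr (Or.inl ⟨p, hp, hp2, rfl⟩)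
  · by_cases hpq : ∃ p q : ℕ, p.Prime ∧ q.Prime ∧ p ≠ q ∧ n = p * q
    · exact Or.inr (Or.inr (Or.inl (Or.inr hpq)))
    · exact Or.inr (Or.inr (Or.inr ⟨hpp, hpq⟩))

lemma prime_sq_eq_four {p : ℕ} (hp : p.Prime) (h : p ^ 2 = 4) : p = 2 := by
  have h4 : p ∣ 2 ^ 2 := by
    rw [show (2:ℕ) ^ 2 = 4 by norm_num]
    exact h ▸ dvd_pow_self p two_ne_zero
  exact (Nat.prime_dvd_prime_iff_eq hp Nat.prime_two).mp (hp.dvd_of_dvd_pow h4)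

lemma prime_dvd_prime_sq {p q : ℕ} (hp : p.Prime) (hq : q.Prime) (h : q ∣ p ^ 2) : q = p :=
  (Nat.prime_dvd_prime_iff_eq hq hp).mp (hq.dvd_of_dvd_pow h)

lemma four_ne_pow {p k : ℕ} (hp : p.Prime) (hk : 2 < k) : p ^ k ≠ 4 := by
  intro h
  have h1 : 2 ^ k ≤ p ^ k := Nat.pow_le_pow_left hp.two_le k
  have h2 : 8 ≤ 2 ^ k := by
    calc (8:ℕ) = 2 ^ 3 := by norm_num
    _ ≤ 2 ^ k := Nat.pow_le_pow_right (by norm_num) (by omega)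
  omega

lemma four_ne_mul {p q : ℕ} (hp : p.Prime) (hq : q.Prime) (hne : p ≠ q) : p * q ≠ 4 := by
  intro h
  have hp2 : p = 2 := by
    have : p ∣ 2 ^ 2 := by
      rw [show (2:ℕ) ^ 2 = 4 by norm_num]
      exact h ▸ dvd_mul_right p q
    exact (Nat.prime_dvd_prime_iff_eq hp Nat.prime_two).mp (hp.dvd_of_dvd_pow this)
  have hq2 : q = 2 := by
    have : q ∣ 2 ^ 2 := by
      rw [show (2:ℕ) ^ 2 = 4 by norm_num]
      exact h ▸ dvd_mul_left q p
    exact (Nat.prime_dvd_prime_iff_eq hq Nat.prime_two).mp (hq.dvd_of_dvd_pow this)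
  exact hne (hp2.trans hq2.symm)

lemma sq_ne_pow {p q k : ℕ} (hp : p.Prime) (hq : q.Prime) (hk : 2 < k) : p ^ 2 ≠ q ^ k := by
  intro h
  have hqd : q ∣ p ^ 2 := h ▸ dvd_pow_self q (by omega : k ≠ 0)
  have hqp : q = p := prime_dvd_prime_sq hp hq hqd
  subst hqp
  have := Nat.pow_right_injective hp.two_le h
  omega

lemma sq_ne_mul {p q r : ℕ} (hp : p.Prime) (hq : q.Prime) (hr : r.Prime) (hne : q ≠ r) :
    p ^ 2 ≠ q * r := by
  intro h
  have hqp : q = p := prime_dvd_prime_sq hp hq (h ▸ dvd_mul_right q r)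
  have hrp : r = p := prime_dvd_prime_sq hp hr (h ▸ dvd_mul_left r q)
  exact hne (hqp.trans hrp.symm)

end assemble

theorem stmt19 (n : ℕ) (hn : 1 < n) (hnp : ¬ n.Prime) :
    ((zdGraph (ZMod n)).ediam = 0 ↔ n = 4) ∧
    ((zdGraph (ZMod n)).ediam = 1 ↔ ∃ p : ℕ, p.Prime ∧ p ≠ 2 ∧ n = p ^ 2) ∧
    ((zdGraph (ZMod n)).ediam = 2 ↔
      ((∃ p k : ℕ, p.Prime ∧ 2 < k ∧ n = p ^ k) ∨
       (∃ p q : ℕ, p.Prime ∧ q.Prime ∧ p ≠ q ∧ n = p * q))) ∧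
    ((zdGraph (ZMod n)).ediam = 3 ↔
      ((¬ ∃ p k : ℕ, p.Prime ∧ 0 < k ∧ n = p ^ k) ∧
       ¬ ∃ p q : ℕ, p.Prime ∧ q.Prime ∧ p ≠ q ∧ n = p * q)) := by
  have V0 : n = 4 → (zdGraph (ZMod n)).ediam = 0 := by rintro rfl; exact caseA
  have V1 : (∃ p : ℕ, p.Prime ∧ p ≠ 2 ∧ n = p ^ 2) → (zdGraph (ZMod n)).ediam = 1 := by
    rintro ⟨p, hp, hp2, rfl⟩; exact caseB hp hp2
  have V2 : ((∃ p k : ℕ, p.Prime ∧ 2 < k ∧ n = p ^ k) ∨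
      (∃ p q : ℕ, p.Prime ∧ q.Prime ∧ p ≠ q ∧ n = p * q)) →
      (zdGraph (ZMod n)).ediam = 2 := by
    rintro (⟨p, k, hp, hk, rfl⟩ | ⟨p, q, hp, hq, hne, rfl⟩)
    · exact caseC1 hp hk
    · exact caseC2 hp hq hne
  have V3 : ((¬ ∃ p k : ℕ, p.Prime ∧ 0 < k ∧ n = p ^ k) ∧
      ¬ ∃ p q : ℕ, p.Prime ∧ q.Prime ∧ p ≠ q ∧ n = p * q) →
      (zdGraph (ZMod n)).ediam = 3 := fun h => caseD hn h.1 h.2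
  have hmaster := classify hn hnp
  refine ⟨⟨?_, ?_⟩, ⟨?_, ?_⟩, ⟨?_, ?_⟩, ⟨?_, ?_⟩⟩
  · intro h
    rcases hmaster with hc | hc | hc | hc
    · exact hc
    · rw [V1 hc] at h; exact absurd h (by decide)
    · rw [V2 hc] at h; exact absurd h (by decide)
    · rw [V3 hc] at h; exact absurd h (by decide)
  · intro h
    rcases hmaster with hc | hc | hc | hc
    · exact V0 hc
    · obtain ⟨p, hp, hp2, he⟩ := hc
      exact absurd (prime_sq_eq_four hp (he.symm.trans h)) hp2
    · rcases hc with ⟨p, k, hp, hk, he⟩ | ⟨p, q, hp, hq, hne, he⟩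
      · exact absurd (he.symm.trans h) (four_ne_pow hp hk)
      · exact absurd (he.symm.trans h) (four_ne_mul hp hq hne)
    · exact absurd ⟨2, 2, Nat.prime_two, two_pos, by rw [h]; norm_num⟩ hc.1
  · intro h
    rcases hmaster with hc | hc | hc | hc
    · rw [V0 hc] at h; exact absurd h (by decide)
    · exact hc
    · rw [V2 hc] at h; exact absurd h (by decide)
    · rw [V3 hc] at h; exact absurd h (by decide)
  · intro h
    obtain ⟨p, hp, hp2, he⟩ := h
    rcases hmaster with hc | hc | hc | hc
    · exact absurd (prime_sq_eq_four hp (he.symm.trans hc)) hp2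
    · exact V1 hc
    · rcases hc with ⟨q, k, hq, hk, he2⟩ | ⟨q, r, hq, hr, hqr, he2⟩
      · exact absurd (he.symm.trans he2) (sq_ne_pow hp hq hk)
      · exact absurd (he.symm.trans he2) (sq_ne_mul hp hq hr hqr)
    · exact absurd ⟨p, 2, hp, two_pos, he⟩ hc.1
  · intro h
    rcases hmaster with hc | hc | hc | hc
    · rw [V0 hc] at h; exact absurd h (by decide)
    · rw [V1 hc] at h; exact absurd h (by decide)
    · exact hc
    · rw [V3 hc] at h; exact absurd h (by decide)
  · intro h
    rcases hmaster with hc | hc | hc | hc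
    · rcases h with ⟨p, k, hp, hk, he⟩ | ⟨p, q, hp, hq, hne, he⟩
      · exact absurd (he.symm.trans hc) (four_ne_pow hp hk)
      · exact absurd (he.symm.trans hc) (four_ne_mul hp hq hne)
    · obtain ⟨p, hp, hp2, he⟩ := hc
      rcases h with ⟨q, k, hq, hk, he2⟩ | ⟨q, r, hq, hr, hqr, he2⟩
      · exact absurd (he.symm.trans he2) (sq_ne_pow hp hq hk)
      · exact absurd (he.symm.trans he2) (sq_ne_mul hp hq hr hqr)
    · exact V2 hc
    · rcases h with ⟨p, k, hp, hk, he⟩ | hpq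
      · exact absurd ⟨p, k, hp, by omega, he⟩ hc.1
      · exact absurd hpq hc.2
  · intro h
    rcases hmaster with hc | hc | hc | hc
    · rw [V0 hc] at h; exact absurd h (by decide)
    · rw [V1 hc] at h; exact absurd h (by decide)
    · rw [V2 hc] at h; exact absurd h (by decide)
    · exact hc
  · intro h
    rcases hmaster with hc | hc | hc | hc
    · exact absurd ⟨2, 2, Nat.prime_two, two_pos, by rw [hc]; norm_num⟩ h.1
    · obtain ⟨p, hp, hp2, he⟩ := hc
      exact absurd ⟨p, 2, hp, two_pos, he⟩ h.1
    · rcases hc with ⟨p, k, hp, hk, he⟩ | hpq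
      · exact absurd ⟨p, k, hp, by omega, he⟩ h.1
      · exact absurd hpq h.2
    · exact V3 hc
end
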